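/- arXiv:math/9810019 — 9 statements merged into one kernel-verified Lean document; each statement's English description precedes it below -/
import Mathlib

section
/- For indeterminates x_1,...,x_n, a_2,...,a_n, b_2,...,b_n, the n×n determinant whose (i,j)-entry is (x_j+a_n)(x_j+a_{n-1})···(x_j+a_{i+1})·(x_j+b_i)(x_j+b_{i-1})···(x_j+b_2) equals ∏_{1≤i<j≤n} (x_i - x_j) · ∏_{2≤i≤j≤n} (b_i - a_j). -/
open Finset Polynomial Matrix

section Helpers
variable {R : Type*}

lemma prod_pairs [CommMonoid R] {m : ℕ} (f : Fin m → Fin m → R) :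
    ∏ p ∈ Finset.univ.filter (fun p : Fin m × Fin m => p.1 < p.2), f p.1 p.2
      = ∏ i, ∏ j ∈ Finset.Ioi i, f i j := by
  rw [Finset.prod_sigma']
  refine Finset.prod_nbij' (fun p => ⟨p.1, p.2⟩) (fun p => (p.1, p.2)) ?_ ?_ ?_ ?_ ?_ <;>
    simp [Finset.mem_sigma]

lemma prod_pairs_neg [CommRing R] {m : ℕ} (u : Fin m → R) :
    ∏ p ∈ Finset.univ.filter (fun p : Fin m × Fin m => p.1 < p.2), (u p.1 - u p.2)
      = (-1 : R) ^ (∑ t ∈ range m, t) * ∏ i, ∏ j ∈ Finset.Ioi i, (u j - u i) := by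
  rw [prod_pairs (fun i j => u i - u j)]
  have h : ∀ i : Fin m, ∏ j ∈ Finset.Ioi i, (u i - u j)
      = (-1 : R) ^ (m - 1 - i.1) * ∏ j ∈ Finset.Ioi i, (u j - u i) := by
    intro i
    rw [← Fin.card_Ioi, ← prod_const, ← prod_mul_distrib]
    exact Finset.prod_congr rfl fun j _ => by ring
  rw [Finset.prod_congr rfl fun i _ => h i, prod_mul_distrib]
  congr 1
  rw [prod_pow_eq_pow_sum]
  congr 1
  rw [Fin.sum_univ_eq_sum_range (fun t => m - 1 - t) m, Finset.sum_range_reflect (fun t => t) m]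

lemma det_eq_of_row_sub_succ {n : ℕ} [CommRing R]
    (A B : Matrix (Fin (n+1)) (Fin (n+1)) R)
    (hlast : ∀ j, A (Fin.last n) j = B (Fin.last n) j)
    (hstep : ∀ (i : Fin n) (j), A i.castSucc j = B i.castSucc j + A i.succ j) :
    A.det = B.det := by
  have h1 : ((A.submatrix Fin.revPerm id)).det = ((B.submatrix Fin.revPerm id)).det := by
    apply Matrix.det_eq_of_forall_row_eq_smul_add_pred (c := fun _ => 1)
    · intro j
      simpa [Matrix.submatrix_apply, Fin.revPerm, Fin.rev_zero] using hlast j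
    · intro i j
      simpa [Matrix.submatrix_apply, Fin.revPerm, Fin.rev_succ, Fin.rev_castSucc, one_mul]
        using hstep i.rev j
  rw [Matrix.det_permute, Matrix.det_permute] at h1
  set s : R := ((Equiv.Perm.sign (Fin.revPerm : Equiv.Perm (Fin (n+1))) : ℤ) : R) with hs
  have hss : s * s = 1 := by
    have h2 : Equiv.Perm.sign (Fin.revPerm : Equiv.Perm (Fin (n+1)))
        * Equiv.Perm.sign (Fin.revPerm : Equiv.Perm (Fin (n+1))) = 1 :=
      Int.units_mul_self _
    rw [hs, ← Int.cast_mul, ← Units.val_mul, h2, Units.val_one, Int.cast_one]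
  calc A.det = (s * s) * A.det := by rw [hss, one_mul]
    _ = s * (s * A.det) := by ring
    _ = s * (s * B.det) := by rw [h1]
    _ = (s * s) * B.det := by ring
    _ = B.det := by rw [hss, one_mul]

lemma prod_Icc_bot [CommMonoid R] {l t : ℕ} (h : l ≤ t) (f : ℕ → R) :
    ∏ k ∈ Icc l t, f k = f l * ∏ k ∈ Icc (l+1) t, f k := by
  rw [← Finset.Ico_add_one_right_eq_Icc, ← Finset.Ico_add_one_right_eq_Icc,
    Finset.prod_eq_prod_Ico_succ_bot (by omega) f]

lemma prod_shift_one [CommMonoid R] (l t : ℕ) (f : ℕ → R) :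
    ∏ k ∈ Icc (l+1) (t+1), f k = ∏ k ∈ Icc l t, f (k+1) := by
  rw [← map_add_right_Icc l t 1, Finset.prod_map]
  rfl

lemma prod_tri [CommRing R] (n : ℕ) (a b : ℕ → R) :
    (∏ t ∈ range n, (b (t+2) - a (t+2)))
        * (∏ j ∈ Icc 2 n, ∏ i ∈ Icc 2 j, (b i - a (j+1)))
      = ∏ j ∈ Icc 2 (n+1), ∏ i ∈ Icc 2 j, (b i - a j) := by
  have hR : ∀ m : ℕ, ∀ F : ℕ → R, ∏ j ∈ Icc 2 (m+1), F j = ∏ t ∈ range m, F (t+2) := by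
    intro m F
    rw [← Finset.Ico_add_one_right_eq_Icc, Finset.prod_Ico_eq_prod_range]
    refine Finset.prod_congr (by rw [show m + 1 + 1 - 2 = m from by omega]) fun t _ => by
      rw [add_comm]
  rw [hR n (fun j => ∏ i ∈ Icc 2 j, (b i - a j))]
  have hsplit : ∀ t : ℕ, ∏ i ∈ Icc 2 (t+2), (b i - a (t+2))
      = (∏ i ∈ Icc 2 (t+1), (b i - a (t+2))) * (b (t+2) - a (t+2)) := fun t =>
    Finset.prod_Icc_succ_top (by omega) _
  rw [Finset.prod_congr rfl fun t _ => hsplit t, prod_mul_distrib, mul_comm]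
  congr 1
  -- ∏ t ∈ range n, ∏ i ∈ Icc 2 (t+1), (b i - a (t+2)) = Cprime
  cases n with
  | zero => simp
  | succ m =>
    rw [Finset.prod_range_succ' (fun t => ∏ i ∈ Icc 2 (t+1), (b i - a (t+2))) m]
    rw [hR m (fun j => ∏ i ∈ Icc 2 j, (b i - a (j+1)))]
    simp [Finset.Icc_eq_empty_of_lt]

end Helpers

/-- Krattenthaler's determinant lemma: for indeterminates `x_1,…,x_n`,
`a_2,…,a_n`, `b_2,…,b_n`, the determinant of the `n × n` matrix whose
`(i,j)`-entry is `(x_j+a_n)(x_j+a_{n-1})⋯(x_j+a_{i+1})·(x_j+b_i)⋯(x_j+b_2)`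
equals `∏_{1≤i<j≤n} (x_i - x_j) · ∏_{2≤i≤j≤n} (b_i - a_j)`. -/
theorem krattenthaler_det_lemma (n : ℕ) (R : Type*) [CommRing R] (x a b : ℕ → R) :
    Matrix.det (Matrix.of fun i j : Fin n =>
        (∏ k ∈ Finset.Icc (i.1 + 2) n, (x (j.1 + 1) + a k)) *
        (∏ k ∈ Finset.Icc 2 (i.1 + 1), (x (j.1 + 1) + b k))) =
      (∏ p ∈ Finset.univ.filter (fun p : Fin n × Fin n => p.1 < p.2),
          (x (p.1.1 + 1) - x (p.2.1 + 1))) *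
      (∏ j ∈ Finset.Icc 2 n, ∏ i ∈ Finset.Icc 2 j, (b i - a j)) := by
  rcases subsingleton_or_nontrivial R with hR | hR
  · exact Subsingleton.elim _ _
  induction n generalizing x a with
  | zero => simp
  | succ n ih =>
    set X : Fin (n+1) → R := fun j => x (j.1+1) with hX
    set P : Matrix (Fin (n+1)) (Fin (n+1)) R := Matrix.of fun i j =>
      if i.1 = n then ∏ k ∈ Icc 2 (n+1), (X j + b k)
      else (∏ k ∈ Icc (i.1+3) (n+1), (X j + a k)) * (∏ k ∈ Icc 2 (i.1+1), (X j + b k))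
      with hP
    set v : Fin (n+1) → R := fun i => if i.1 = n then 1 else a (i.1+2) - b (i.1+2) with hv
    set M : Matrix (Fin (n+1)) (Fin (n+1)) R := Matrix.of fun i j =>
      (∏ k ∈ Icc (i.1+2) (n+1), (X j + a k)) * (∏ k ∈ Icc 2 (i.1+1), (X j + b k)) with hM
    have step1 : M.det = (Matrix.of fun i j => v i * P i j).det := by
      apply det_eq_of_row_sub_succ
      · intro j
        simp only [hM, hP, hv, Matrix.of_apply, Fin.val_last, if_pos rfl]
        rw [Finset.Icc_eq_empty (by omega)]
        simp
      · intro i j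
        have h1 : ∏ k ∈ Icc (i.1+2) (n+1), (X j + a k)
            = (X j + a (i.1+2)) * ∏ k ∈ Icc (i.1+3) (n+1), (X j + a k) :=
          prod_Icc_bot (by omega) _
        have h2 : ∏ k ∈ Icc 2 (i.1+2), (X j + b k)
            = (∏ k ∈ Icc 2 (i.1+1), (X j + b k)) * (X j + b (i.1+2)) :=
          Finset.prod_Icc_succ_top (by omega) _
        simp only [hM, hP, hv, Matrix.of_apply, Fin.coe_castSucc, Fin.val_succ]
        rw [if_neg (by omega), if_neg (by omega)]
        have hi2 : i.1 + 1 + 2 = i.1 + 3 := by omega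
        have hi3 : i.1 + 1 + 1 = i.1 + 2 := by omega
        rw [hi2, hi3, h1, h2]
        ring
    have step2 : (Matrix.of fun i j => v i * P i j).det = (∏ i, v i) * P.det :=
      Matrix.det_mul_column v P
    have prodc : (∏ i, v i) = ∏ t ∈ range n, (a (t+2) - b (t+2)) := by
      rw [Fin.prod_univ_castSucc]
      have hlast : v (Fin.last n) = 1 := by simp [hv]
      have hcast : ∀ i : Fin n, v i.castSucc = a (i.1+2) - b (i.1+2) := fun i => by
        simp only [hv, Fin.coe_castSucc]
        rw [if_neg (by omega)]
      rw [hlast, mul_one, ← Fin.prod_univ_eq_prod_range (fun t => a (t+2) - b (t+2)) n]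
      exact Finset.prod_congr rfl fun i _ => hcast i
    -- the power-row matrix
    set W : Matrix (Fin (n+1)) (Fin (n+1)) R := Matrix.of fun i j =>
      if i.1 = n then ∏ k ∈ Icc 2 (n+1), (X j + b k) else X j ^ i.1 with hW
    set Cp : R := ∏ j ∈ Icc 2 n, ∏ i ∈ Icc 2 j, (b i - a (j+1)) with hCp
    set s : R := (-1 : R) ^ (∑ t ∈ range n, t) with hs
    have minors : ∀ j : Fin (n+1),
        (P.submatrix (Fin.last n).succAbove j.succAbove).det
          = s * Cp * (W.submatrix (Fin.last n).succAbove j.succAbove).det := by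
      intro j
      set x' : ℕ → R := fun m => if h : m - 1 < n then x ((j.succAbove ⟨m-1, h⟩).1 + 1) else 0
        with hx'
      have hxv : ∀ j' : Fin n, x' (j'.1+1) = X (j.succAbove j') := by
        intro j'
        simp only [hx', hX, Nat.add_sub_cancel]
        rw [dif_pos j'.isLt]
      have hPsub : P.submatrix (Fin.last n).succAbove j.succAbove
          = Matrix.of (fun i' j' : Fin n =>
            (∏ k ∈ Finset.Icc (i'.1 + 2) n, (x' (j'.1 + 1) + (fun k => a (k+1)) k)) *
            (∏ k ∈ Finset.Icc 2 (i'.1 + 1), (x' (j'.1 + 1) + b k))) := by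
        ext i' j'
        simp only [Matrix.submatrix_apply, Fin.succAbove_last, hP, Matrix.of_apply,
          Fin.coe_castSucc]
        rw [if_neg (by omega), hxv j']
        congr 1
        rw [show i'.1 + 3 = (i'.1 + 2) + 1 from by omega,
          prod_shift_one (i'.1+2) n (fun k => X (j.succAbove j') + a k)]
      have hWsub : W.submatrix (Fin.last n).succAbove j.succAbove
          = (Matrix.vandermonde (fun j' => X (j.succAbove j')))ᵀ := by
        ext i' j'
        simp only [Matrix.submatrix_apply, Fin.succAbove_last, hW, Matrix.of_apply,
          Fin.coe_castSucc, Matrix.vandermonde, Matrix.transpose_apply]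
        rw [if_neg (by omega)]
      rw [hPsub, ih x' (fun k => a (k+1)), hWsub, Matrix.det_transpose,
        Matrix.det_vandermonde]
      have hfilter : ∏ p ∈ Finset.univ.filter (fun p : Fin n × Fin n => p.1 < p.2),
          (x' (p.1.1 + 1) - x' (p.2.1 + 1))
          = ∏ p ∈ Finset.univ.filter (fun p : Fin n × Fin n => p.1 < p.2),
            (X (j.succAbove p.1) - X (j.succAbove p.2)) :=
        Finset.prod_congr rfl fun p _ => by rw [hxv, hxv]
      rw [hfilter, prod_pairs_neg (fun p => X (j.succAbove p))]
      ring
    have step3 : P.det = s * Cp * W.det := by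
      rw [Matrix.det_succ_row P (Fin.last n), Matrix.det_succ_row W (Fin.last n),
        Finset.mul_sum]
      refine Finset.sum_congr rfl fun j _ => ?_
      rw [minors j]
      have hPW : P (Fin.last n) j = W (Fin.last n) j := by
        simp [hP, hW]
      rw [hPW]
      ring
    -- W = L * vandermonde
    set p : Polynomial R := ∏ k ∈ Icc 2 (n+1), (Polynomial.X + Polynomial.C (b k)) with hp
    have hmonic : p.Monic := monic_prod_of_monic _ _ fun k _ => monic_X_add_C _
    have hdeg : p.natDegree = n := by
      rw [hp, natDegree_prod_of_monic _ _ fun k _ => monic_X_add_C _]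
      rw [Finset.sum_congr rfl fun k _ => natDegree_X_add_C (b k)]
      simp [Nat.card_Icc]
    set L : Matrix (Fin (n+1)) (Fin (n+1)) R := Matrix.of fun i m =>
      if i.1 = n then p.coeff m.1 else if m = i then 1 else 0 with hL
    have hWLV : W = L * (Matrix.vandermonde X)ᵀ := by
      ext i j
      rw [Matrix.mul_apply]
      by_cases hi : i.1 = n
      · simp only [hW, hL, Matrix.of_apply, hi, Matrix.vandermonde,
          Matrix.transpose_apply, eq_self_iff_true, if_true]
        rw [Fin.sum_univ_eq_sum_range (fun m => p.coeff m * X j ^ m) (n+1),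
          ← Polynomial.eval_eq_sum_range' (by omega)]
        simp [hp, eval_prod]
      · simp only [hW, hL, Matrix.of_apply, hi, Matrix.vandermonde,
          Matrix.transpose_apply, if_false]
        rw [Finset.sum_eq_single i (fun m _ hm => by rw [if_neg hm, zero_mul])
          (fun h => absurd (Finset.mem_univ i) h)]
        rw [if_pos rfl, one_mul]
    have hdetL : L.det = 1 := by
      have htri : L.BlockTriangular OrderDual.toDual := by
        intro i j hij
        have hij' : i < j := hij
        simp only [hL, Matrix.of_apply]
        rw [if_neg (by omega), if_neg (by exact fun h => absurd h (ne_of_gt hij'))]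
      rw [Matrix.det_of_lowerTriangular L htri, Fin.prod_univ_castSucc]
      have h1 : ∀ i : Fin n, L i.castSucc i.castSucc = 1 := by
        intro i
        simp only [hL, Matrix.of_apply, Fin.coe_castSucc]
        rw [if_neg (by omega)]
        simp
      have h2 : L (Fin.last n) (Fin.last n) = 1 := by
        simp only [hL, Matrix.of_apply, Fin.val_last, if_pos rfl]
        rw [← hdeg]
        exact hmonic.coeff_natDegree
      simp [h1, h2]
    have step4 : W.det = (Matrix.vandermonde X).det := by
      rw [hWLV, Matrix.det_mul, hdetL, one_mul, Matrix.det_transpose]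
    -- assemble
    show M.det = _
    rw [step1, step2, step3, step4, prodc, Matrix.det_vandermonde,
      prod_pairs_neg X, Finset.sum_range_succ, pow_add]
    have hab : ∏ t ∈ range n, (a (t+2) - b (t+2))
        = (-1:R)^n * ∏ t ∈ range n, (b (t+2) - a (t+2)) := by
      calc ∏ t ∈ range n, (a (t+2) - b (t+2))
          = ∏ t ∈ range n, ((-1:R) * (b (t+2) - a (t+2))) :=
            Finset.prod_congr rfl fun t _ => by ring
        _ = (-1:R)^n * ∏ t ∈ range n, (b (t+2) - a (t+2)) := by
            rw [prod_mul_distrib, prod_const, card_range]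
    rw [hab, ← prod_tri n a b, hs, hCp]
    ring
end

section
/- For nonnegative integers m and n with n ≥ 1, det_{1≤i,j≤n} binomial(m+j-1, m-j+i) = (∏_{i=0}^{n-1} i!) · ∏_{2≤i≤j≤n}(2m+2j-i) / ∏_{j=1}^{n}(2j-2)!. -/
open Nat

section UpperHalfDet
open Finset


def tt (m i j k : ℕ) : ℕ :=
  if k ≤ i ∧ k ≤ j then
    (2*m+2*k).choose (m+k) * (m+k).choose k * k.choose (i-k) * m.choose (j-k)
  else 0

def HH (m i j k : ℕ) : ℕ :=
  if k ≤ i+1 ∧ k ≤ j+1 then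
    k * (j+1-k) * ((2*m+2*k).choose (m+k)) * ((m+k).choose k)
      * ((k-1).choose (i+1-k)) * (m.choose (j+1-k))
  else 0

lemma tt_pos {m i j k : ℕ} (h1 : k ≤ i) (h2 : k ≤ j) : tt m i j k =
    (2*m+2*k).choose (m+k) * (m+k).choose k * k.choose (i-k) * m.choose (j-k) :=
  if_pos ⟨h1, h2⟩

lemma tt_neg {m i j k : ℕ} (h : ¬ (k ≤ i ∧ k ≤ j)) : tt m i j k = 0 := if_neg h

lemma HH_pos {m i j k : ℕ} (h1 : k ≤ i+1) (h2 : k ≤ j+1) : HH m i j k =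
    k * (j+1-k) * ((2*m+2*k).choose (m+k)) * ((m+k).choose k)
      * ((k-1).choose (i+1-k)) * (m.choose (j+1-k)) :=
  if_pos ⟨h1, h2⟩

lemma HH_neg {m i j k : ℕ} (h : ¬ (k ≤ i+1 ∧ k ≤ j+1)) : HH m i j k = 0 := if_neg h

lemma hA (m k : ℕ) : ((k:ℚ)+1) * ((2*m+2*k+2).choose (m+k+1)) * ((m+k+1).choose (k+1)) =
    2*(2*(m:ℚ)+2*k+1) * ((2*m+2*k).choose (m+k)) * ((m+k).choose k) := by
  rw [Nat.cast_choose ℚ (by omega : m+k+1 ≤ 2*m+2*k+2),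
      Nat.cast_choose ℚ (by omega : k+1 ≤ m+k+1),
      Nat.cast_choose ℚ (by omega : m+k ≤ 2*m+2*k),
      Nat.cast_choose ℚ (by omega : k ≤ m+k)]
  rw [show 2*m+2*k+2 - (m+k+1) = (m+k)+1 by omega,
      show m+k+1 - (k+1) = m by omega,
      show 2*m+2*k - (m+k) = m+k by omega,
      show m+k - k = m by omega,
      show 2*m+2*k+2 = (2*m+2*k+1)+1 by omega]
  rw [Nat.factorial_succ (2*m+2*k+1), show (2*m+2*k+1) = (2*m+2*k)+1 by omega,
      Nat.factorial_succ (2*m+2*k), Nat.factorial_succ (m+k), Nat.factorial_succ k]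
  push_cast
  have h1 : ((m+k : ℕ)! : ℚ) ≠ 0 := by positivity
  have h2 : ((k : ℕ)! : ℚ) ≠ 0 := by positivity
  have h3 : ((m : ℕ)! : ℚ) ≠ 0 := by positivity
  field_simp
  ring

lemma wz (m i j k : ℕ) (hj : j ≤ m + i) (hij : i + 1 ≤ 2*j) :
    (i+1) * (m+i+1-j) * tt m (i+1) j k + HH m i j (k+1)
      = (2*j-i) * (2*m+i+1) * tt m i j k + HH m i j k := by
  rcases le_or_gt (j+2) k with hk | hk
  · rw [tt_neg (by omega), tt_neg (by omega), HH_neg (by omega), HH_neg (by omega)]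
    ring
  rcases eq_or_lt_of_le (show k ≤ j+1 by omega) with hk1 | hk1
  · -- k = j+1
    have hz : HH m i j (j+1) = 0 := by
      unfold HH; split
      · rw [Nat.sub_self]; ring
      · rfl
    subst hk1
    rw [tt_neg (by omega), tt_neg (by omega), HH_neg (by omega), hz]
    ring
  have hkj : k ≤ j := by omega
  rcases le_or_gt (i+2) k with hk2 | hk2
  · -- k ≥ i+2
    rw [tt_neg (by omega), tt_neg (by omega), HH_neg (by omega), HH_neg (by omega)]
    ring
  rcases eq_or_lt_of_le (show k ≤ i+1 by omega) with hk3 | hk3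
  · -- k = i+1
    subst hk3
    rw [tt_pos (m:=m) (i:=i+1) (j:=j) (k:=i+1) le_rfl hkj,
        tt_neg (m:=m) (i:=i) (j:=j) (k:=i+1) (by omega),
        HH_neg (m:=m) (i:=i) (j:=j) (k:=i+1+1) (by omega),
        HH_pos (m:=m) (i:=i) (j:=j) (k:=i+1) le_rfl (by omega)]
    rw [← @Nat.cast_inj ℚ]
    have habs := congrArg (Nat.cast (R := ℚ)) (Nat.choose_succ_right_eq m (j-(i+1)))
    rw [show j-(i+1)+1 = j-i by omega, show m - (j-(i+1)) = m+i+1-j by omega] at habs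
    push_cast at habs ⊢
    rw [show i-i = 0 by omega, Nat.choose_zero_right, Nat.choose_zero_right]
    push_cast
    linear_combination (-(((i:ℚ)+1) * ((2*m+2*(i+1)).choose (m+(i+1)) : ℚ) *
      ((m+(i+1)).choose (i+1) : ℚ))) * habs
  -- now k ≤ i and k ≤ j
  have hki : k ≤ i := by omega
  rcases lt_or_ge (2*k) i with hs | hs
  · -- 2k < i : all terms vanish via choose = 0
    rw [tt_pos (by omega) hkj, tt_pos hki hkj, HH_pos (by omega) (by omega),
        HH_pos (by omega) (by omega)]
    rw [show k+1-1 = k by omega, show i+1-(k+1) = i-k by omega,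
        Nat.choose_eq_zero_of_lt (show k < i+1-k by omega),
        Nat.choose_eq_zero_of_lt (show k < i-k by omega),
        Nat.choose_eq_zero_of_lt (show k-1 < i+1-k by omega)]
    ring
  rcases eq_or_lt_of_le hs with hs0 | hs1
  · -- 2k = i
    rw [tt_pos (by omega) hkj, tt_pos hki hkj, HH_pos (by omega) (by omega),
        HH_pos (by omega) (by omega)]
    rw [show k+1-1 = k by omega,
        Nat.choose_eq_zero_of_lt (show k < i+1-k by omega),
        Nat.choose_eq_zero_of_lt (show k-1 < i+1-k by omega)]
    rw [show i+1-(k+1) = i-k by omega, show j+1-(k+1) = j-k by omega,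
        show 2*m+2*(k+1) = 2*m+2*k+2 by omega, show m+(k+1) = m+k+1 by omega,
        show 2*j-i = 2*(j-k) by omega, show 2*m+i+1 = 2*m+2*k+1 by omega]
    rw [← @Nat.cast_inj ℚ]
    push_cast [Nat.cast_sub hkj]
    linear_combination ((j:ℚ)-k) * (k.choose (i-k) : ℚ) * (m.choose (j-k) : ℚ) * hA m k
  -- now 2k ≥ i+1 ; split on whether m < j-k
  rcases lt_or_ge m (j-k) with hd | hd
  · -- m < j - k : all terms vanish
    rw [tt_pos (by omega) hkj, tt_pos hki hkj, HH_pos (by omega) (by omega),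
        HH_pos (by omega) (by omega)]
    rw [show j+1-(k+1) = j-k by omega,
        Nat.choose_eq_zero_of_lt (show m < j-k from hd),
        Nat.choose_eq_zero_of_lt (show m < j+1-k by omega)]
    ring
  rcases eq_or_lt_of_le (show i+1 ≤ 2*k from hs1) with hs2 | hs3
  · -- 2k = i+1
    have hk1' : 1 ≤ k := by omega
    rw [tt_pos (by omega) hkj, tt_pos hki hkj, HH_pos (by omega) (by omega),
        HH_pos (by omega) (by omega)]
    rw [show k+1-1 = k by omega, show i+1-(k+1) = k-1 by omega,
        show j+1-(k+1) = j-k by omega,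
        show 2*m+2*(k+1) = 2*m+2*k+2 by omega, show m+(k+1) = m+k+1 by omega,
        Nat.choose_eq_zero_of_lt (show k-1 < i+1-k by omega),
        show i+1-k = k by omega, show i-k = k-1 by omega, Nat.choose_self,
        show k.choose (k-1) = k by
          rw [← Nat.choose_symm (show k-1 ≤ k by omega), show k-(k-1) = 1 by omega,
            Nat.choose_one_right],
        show j+1-k = (j-k)+1 by omega,
        show m+i+1-j = (m-(j-k))+k by omega, show 2*j-i = 2*(j-k)+1 by omega,
        show 2*m+i+1 = 2*(m+k) by omega, show i+1 = 2*k by omega]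
    rw [← @Nat.cast_inj ℚ]
    push_cast [Nat.cast_sub hkj, Nat.cast_sub hd]
    linear_combination ((j:ℚ)-k) * (k:ℚ) * (m.choose (j-k) : ℚ) * hA m k
  · -- generic case : 2k ≥ i+2
    have hk1' : 1 ≤ k := by omega
    rw [tt_pos (by omega) hkj, tt_pos hki hkj, HH_pos (by omega) (by omega),
        HH_pos (by omega) (by omega)]
    rw [show k+1-1 = k by omega, show i+1-(k+1) = i-k by omega,
        show j+1-(k+1) = j-k by omega,
        show 2*m+2*(k+1) = 2*m+2*k+2 by omega, show m+(k+1) = m+k+1 by omega,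
        show j+1-k = (j-k)+1 by omega, show i+1-k = (i-k)+1 by omega]
    rw [← @Nat.cast_inj ℚ]
    have h2 := congrArg (Nat.cast (R := ℚ)) (Nat.choose_succ_right_eq m (j-k))
    have h3 := congrArg (Nat.cast (R := ℚ)) (Nat.choose_succ_right_eq k (i-k))
    have h4 := congrArg (Nat.cast (R := ℚ)) (Nat.choose_mul_succ_eq (k-1) (i-k+1))
    rw [show k-1+1 = k by omega] at h4
    rw [show k - (i-k+1) = k-(i-k)-1 by omega] at h4
    push_cast [Nat.cast_sub hkj, Nat.cast_sub hd, Nat.cast_sub hki,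
      Nat.cast_sub (show i-k ≤ k by omega),
      Nat.cast_sub (show 1 ≤ k - (i-k) by omega),
      Nat.cast_sub (show j ≤ m+i+1 by omega),
      Nat.cast_sub (show i ≤ 2*j by omega)] at h2 h3 h4 ⊢
    have ha1 : ((i:ℚ)-(k:ℚ)+1) ≠ 0 := by
      have : (k:ℚ) ≤ (i:ℚ) := by exact_mod_cast hki
      intro h; linarith
    apply mul_left_cancel₀ ha1
    linear_combination
      (((i:ℚ)-k+1) * ((j:ℚ)-k) * (k.choose (i-k) : ℚ) * (m.choose (j-k) : ℚ)) * hA m k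
      + (-(((i:ℚ)-k+1)) * ((k:ℚ)-((i:ℚ)-k)-1) * (((2*m+2*k).choose (m+k) : ℕ) : ℚ) *
          (((m+k).choose k : ℕ) : ℚ) * ((k.choose (i-k+1) : ℕ) : ℚ)) * h2
      + (((((i:ℚ)+1)*((m:ℚ)+i+1-j)) - ((k:ℚ)-((i:ℚ)-k)-1)*((m:ℚ)-((j:ℚ)-k))) *
          (((2*m+2*k).choose (m+k) : ℕ) : ℚ) * (((m+k).choose k : ℕ) : ℚ) *
          ((m.choose (j-k) : ℕ) : ℚ)) * h3
      + (-(((i:ℚ)-k+1)) * (((j:ℚ)-k)+1) * (((2*m+2*k).choose (m+k) : ℕ) : ℚ) *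
          (((m+k).choose k : ℕ) : ℚ) * ((m.choose (j-k+1) : ℕ) : ℚ)) * h4

lemma HH_zero (m i j : ℕ) : HH m i j 0 = 0 := by
  unfold HH; split <;> simp

lemma sum_ext (m i j N : ℕ) (hN : i+1 ≤ N) :
    ∑ k ∈ range N, tt m i j k = ∑ k ∈ range (i+1), tt m i j k := by
  rw [← Finset.sum_subset (Finset.range_subset_range.2 hN)]
  intro x _ hx
  exact tt_neg (by simp at hx; omega)

lemma step (m i j : ℕ) (hj : j ≤ m+i) (hij : i+1 ≤ 2*j) :
    (i+1)*(m+i+1-j) * (∑ k ∈ range (i+2), tt m (i+1) j k)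
      = (2*j-i)*(2*m+i+1) * (∑ k ∈ range (i+1), tt m i j k) := by
  set N := i+j+2 with hN
  rw [← sum_ext m (i+1) j N (by omega), ← sum_ext m i j N (by omega)]
  have tele : ∑ k ∈ range N, HH m i j (k+1) = ∑ k ∈ range N, HH m i j k := by
    have h1 : ∑ k ∈ range (N+1), HH m i j k
        = (∑ k ∈ range N, HH m i j (k+1)) + HH m i j 0 := Finset.sum_range_succ' _ N
    have h2 : ∑ k ∈ range (N+1), HH m i j k
        = (∑ k ∈ range N, HH m i j k) + HH m i j N := Finset.sum_range_succ _ N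
    rw [HH_zero] at h1
    rw [HH_neg (by omega)] at h2
    omega
  have hsum : ∑ k ∈ range N, ((i+1) * (m+i+1-j) * tt m (i+1) j k + HH m i j (k+1))
      = ∑ k ∈ range N, ((2*j-i) * (2*m+i+1) * tt m i j k + HH m i j k) :=
    Finset.sum_congr rfl (fun k _ => wz m i j k hj hij)
  rw [Finset.sum_add_distrib, Finset.sum_add_distrib, tele, ← Finset.mul_sum,
      ← Finset.mul_sum] at hsum
  omega

set_option maxHeartbeats 1000000 in
lemma rhs_ratio (m i j : ℕ) (hj : j ≤ m+i) (hij : i+1 ≤ 2*j) :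
    (i+1)*(m+i+1-j) * ((2*j).choose (i+1) * (2*m+i+1).choose m * (m+i+1).choose j)
      = (2*j-i)*(2*m+i+1) * ((2*j).choose i * (2*m+i).choose m * (m+i).choose j) := by
  rw [← @Nat.cast_inj ℚ]
  push_cast
  rw [Nat.cast_choose ℚ (by omega : i+1 ≤ 2*j), Nat.cast_choose ℚ (by omega : m ≤ 2*m+i+1),
      Nat.cast_choose ℚ (by omega : j ≤ m+i+1), Nat.cast_choose ℚ (by omega : i ≤ 2*j),
      Nat.cast_choose ℚ (by omega : m ≤ 2*m+i), Nat.cast_choose ℚ (by omega : j ≤ m+i)]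
  rw [show 2*m+i+1-m = (m+i)+1 by omega, show 2*m+i-m = m+i by omega,
      show m+i+1-j = (m+i-j)+1 by omega, show 2*j-i = (2*j-(i+1))+1 by omega,
      show m+i+1 = (m+i)+1 by omega, show 2*m+i+1 = (2*m+i)+1 by omega]
  rw [Nat.factorial_succ (m+i-j), Nat.factorial_succ (2*j-(i+1)), Nat.factorial_succ (m+i),
      Nat.factorial_succ (2*m+i), Nat.factorial_succ i]
  push_cast [Nat.cast_sub (show j ≤ m+i by omega), Nat.cast_sub (show i+1 ≤ 2*j by omega)]
  have n1 : ((2*j : ℕ)! : ℚ) ≠ 0 := by positivity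
  have n2 : ((i : ℕ)! : ℚ) ≠ 0 := by positivity
  have n3 : ((2*j-(i+1) : ℕ)! : ℚ) ≠ 0 := by positivity
  have n4 : ((m : ℕ)! : ℚ) ≠ 0 := by positivity
  have n5 : ((m+i : ℕ)! : ℚ) ≠ 0 := by positivity
  have n6 : ((j : ℕ)! : ℚ) ≠ 0 := by positivity
  have n7 : ((m+i-j : ℕ)! : ℚ) ≠ 0 := by positivity
  have n8 : ((2*m+i : ℕ)! : ℚ) ≠ 0 := by positivity
  have z1 : ((i:ℚ)+1) ≠ 0 := by positivity
  have z2 : ((m:ℚ)+(i:ℚ)-(j:ℚ)+1) ≠ 0 := by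
    have : (j:ℚ) ≤ (m:ℚ)+(i:ℚ) := by exact_mod_cast hj
    intro h; linarith
  have z3 : (2*(j:ℚ)-((i:ℚ)+1)+1) ≠ 0 := by
    have : (i:ℚ)+1 ≤ 2*(j:ℚ) := by exact_mod_cast hij
    intro h; linarith
  have z4 : ((m:ℚ)+(i:ℚ)+1) ≠ 0 := by positivity
  have z5 : (2*(m:ℚ)+(i:ℚ)+1) ≠ 0 := by positivity
  have z6 : (2*(j:ℚ)-(i:ℚ)) ≠ 0 := by
    have : (i:ℚ)+1 ≤ 2*(j:ℚ) := by exact_mod_cast hij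
    intro h; linarith
  field_simp
  ring_nf
  have z7 : (j:ℚ)*2 - i ≠ 0 := by rw [mul_comm]; exact z6
  field_simp

lemma key (m : ℕ) : ∀ i j, (∑ k ∈ range (i+1), tt m i j k)
    = (2*j).choose i * (2*m+i).choose m * (m+i).choose j := by
  intro i
  induction i with
  | zero =>
    intro j
    simp [tt]
  | succ i IH =>
    intro j
    by_cases h1 : 2*j < i+1
    · rw [Nat.choose_eq_zero_of_lt (by omega : 2*j < i+1)]
      rw [Finset.sum_eq_zero, Nat.zero_mul, Nat.zero_mul]
      intro k hk
      simp only [Finset.mem_range] at hk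
      by_cases hkj : k ≤ j
      · rw [tt_pos (by omega) hkj, Nat.choose_eq_zero_of_lt (show k < i+1-k by omega)]
        ring
      · exact tt_neg (by omega)
    by_cases h2 : m+i+1 < j
    · rw [Nat.choose_eq_zero_of_lt (show m+(i+1) < j by omega)]
      rw [Finset.sum_eq_zero, Nat.mul_zero]
      intro k hk
      simp only [Finset.mem_range] at hk
      by_cases hkj : k ≤ j
      · rw [tt_pos (by omega) hkj, Nat.choose_eq_zero_of_lt (show m < j-k by omega)]
        ring
      · exact tt_neg (by omega)
    by_cases h3 : j = m+i+1
    · subst h3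
      rw [Finset.sum_range_succ, Finset.sum_eq_zero, Nat.zero_add]
      · rw [tt_pos le_rfl (by omega), show i+1-(i+1) = 0 by omega, Nat.choose_zero_right,
          show m+i+1-(i+1) = m by omega, Nat.choose_self,
          show (m+(i+1)).choose (m+i+1) = 1 by
            rw [show m+(i+1) = m+i+1 by omega, Nat.choose_self],
          Nat.mul_one, Nat.mul_one, Nat.mul_one]
        rw [← @Nat.cast_inj ℚ]
        push_cast
        rw [Nat.cast_choose ℚ (by omega : m+(i+1) ≤ 2*m+2*(i+1)),
            Nat.cast_choose ℚ (by omega : i+1 ≤ m+(i+1)),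
            Nat.cast_choose ℚ (by omega : i+1 ≤ 2*(m+i+1)),
            Nat.cast_choose ℚ (by omega : m ≤ 2*m+(i+1))]
        rw [show 2*m+2*(i+1) - (m+(i+1)) = m+(i+1) by omega,
            show m+(i+1)-(i+1) = m by omega,
            show 2*(m+i+1)-(i+1) = 2*m+(i+1) by omega,
            show 2*m+(i+1)-m = m+(i+1) by omega,
            show 2*(m+i+1) = 2*m+2*(i+1) by omega]
        have n1 : ((m+(i+1) : ℕ)! : ℚ) ≠ 0 := by positivity
        have n2 : ((m : ℕ)! : ℚ) ≠ 0 := by positivity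
        have n3 : (((i+1) : ℕ)! : ℚ) ≠ 0 := by positivity
        have n4 : ((2*m+(i+1) : ℕ)! : ℚ) ≠ 0 := by positivity
        field_simp
      · intro k hk
        simp only [Finset.mem_range] at hk
        rw [tt_pos (by omega) (by omega), Nat.choose_eq_zero_of_lt (show m < m+i+1-k by omega)]
        ring
    · have hj : j ≤ m+i := by omega
      have hij : i+1 ≤ 2*j := by omega
      have hstep := step m i j hj hij
      rw [IH j] at hstep
      have hr := rhs_ratio m i j hj hij
      rw [show i+1+1 = i+2 by omega, show 2*m+(i+1) = 2*m+i+1 by omega,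
          show m+(i+1) = m+i+1 by omega]
      exact Nat.eq_of_mul_eq_mul_left
        (Nat.mul_pos (by omega) (by omega)) (hstep.trans hr.symm)

noncomputable def Lq (m i k : ℕ) : ℚ :=
  if k ≤ i then (k.choose (i-k) : ℚ) * ((i ! * (2*m+k)! : ℕ) : ℚ) / ((k ! * (2*m+i)! : ℕ) : ℚ)
  else 0

noncomputable def Uq (m k j : ℕ) : ℚ :=
  if k ≤ j then (m.choose (j-k) : ℚ) *
    (((2*m+2*k)! * (m+j)! * j ! : ℕ) : ℚ) / (((2*m+k)! * (m+k)! * (2*j)! : ℕ) : ℚ)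
  else 0

lemma Lq_diag (m i : ℕ) : Lq m i i = 1 := by
  rw [Lq, if_pos le_rfl, Nat.sub_self, Nat.choose_zero_right, Nat.cast_one, one_mul]
  exact div_self (by positivity)

lemma Lq_zero {m i k : ℕ} (h : i < k) : Lq m i k = 0 := if_neg (by omega)

lemma Uq_zero {m k j : ℕ} (h : j < k) : Uq m k j = 0 := if_neg (by omega)

/-- pointwise product identity -/
lemma LU_term (m i j k : ℕ) (hki : k ≤ i) :
    Lq m i k * Uq m k j =
      ((i ! * m ! * (m+j)! * j ! : ℕ) : ℚ) / (((2*m+i)! * (2*j)! : ℕ) : ℚ) * (tt m i j k : ℚ) := by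
  by_cases hkj : k ≤ j
  · rw [Lq, if_pos hki, Uq, if_pos hkj, tt_pos hki hkj]
    have e1 : (((2*m+2*k).choose (m+k) : ℕ) : ℚ) = ((2*m+2*k)! : ℚ) / ((m+k)! * (m+k)! : ℚ) := by
      rw [Nat.cast_choose ℚ (by omega : m+k ≤ 2*m+2*k), show 2*m+2*k-(m+k) = m+k by omega]
    have e2 : (((m+k).choose k : ℕ) : ℚ) = ((m+k)! : ℚ) / ((k)! * (m)! : ℚ) := by
      rw [Nat.cast_choose ℚ (by omega : k ≤ m+k), show m+k-k = m by omega]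
    push_cast
    rw [e1, e2]
    have n1 : ((m+k : ℕ)! : ℚ) ≠ 0 := by positivity
    have n2 : ((k : ℕ)! : ℚ) ≠ 0 := by positivity
    have n3 : ((m : ℕ)! : ℚ) ≠ 0 := by positivity
    have n4 : (((2*m+k) : ℕ)! : ℚ) ≠ 0 := by positivity
    have n5 : (((2*m+i) : ℕ)! : ℚ) ≠ 0 := by positivity
    have n6 : (((2*j) : ℕ)! : ℚ) ≠ 0 := by positivity
    field_simp
  · rw [Uq, if_neg hkj, tt_neg (by omega)]
    push_cast
    ring

lemma entry (m i j : ℕ) :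
    ∑ k ∈ range (i+1), Lq m i k * Uq m k j =
      (if m + i < j then (0:ℚ) else ((m+j).choose (m+i-j) : ℚ)) := by
  have hsum : ∑ k ∈ range (i+1), Lq m i k * Uq m k j =
      ((i ! * m ! * (m+j)! * j ! : ℕ) : ℚ) / (((2*m+i)! * (2*j)! : ℕ) : ℚ) *
        ((∑ k ∈ range (i+1), tt m i j k : ℕ) : ℚ) := by
    push_cast
    rw [Finset.mul_sum]
    refine Finset.sum_congr rfl fun k hk => ?_
    simp only [Finset.mem_range] at hk
    rw [LU_term m i j k (by omega)]
    push_cast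
    ring
  rw [hsum, key m i j]
  by_cases h1 : m + i < j
  · rw [if_pos h1, Nat.choose_eq_zero_of_lt (show m+i < j from h1)]
    push_cast
    ring
  · rw [if_neg h1]
    by_cases h2 : 2*j < i
    · rw [Nat.choose_eq_zero_of_lt (show 2*j < i from h2),
          Nat.choose_eq_zero_of_lt (show m+j < m+i-j by omega)]
      push_cast
      ring
    · push_cast
      rw [Nat.cast_choose ℚ (by omega : i ≤ 2*j), Nat.cast_choose ℚ (by omega : m ≤ 2*m+i),
          Nat.cast_choose ℚ (by omega : j ≤ m+i), Nat.cast_choose ℚ (by omega : m+i-j ≤ m+j)]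
      rw [show 2*m+i-m = m+i by omega, show m+j-(m+i-j) = 2*j-i by omega]
      push_cast
      have n1 : ((i : ℕ)! : ℚ) ≠ 0 := by positivity
      have n2 : ((m : ℕ)! : ℚ) ≠ 0 := by positivity
      have n3 : ((j : ℕ)! : ℚ) ≠ 0 := by positivity
      have n4 : ((2*j-i : ℕ)! : ℚ) ≠ 0 := by positivity
      have n5 : ((m+i-j : ℕ)! : ℚ) ≠ 0 := by positivity
      have n6 : ((m+i : ℕ)! : ℚ) ≠ 0 := by positivity
      have n7 : ((2*m+i : ℕ)! : ℚ) ≠ 0 := by positivity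
      have n8 : ((2*j : ℕ)! : ℚ) ≠ 0 := by positivity
      field_simp

lemma prod_Icc_fac (a : ℕ) : ∀ d : ℕ, (∏ v ∈ Icc (a+1) (a+d), (v:ℚ)) = ((a+d)! : ℚ) / (a ! : ℚ)
  | 0 => by
    rw [show a+0 = a from rfl, show Icc (a+1) a = ∅ from Finset.Icc_eq_empty (by omega)]
    rw [Finset.prod_empty, div_self (by positivity : ((a:ℕ)! : ℚ) ≠ 0)]
  | (d+1) => by
    rw [show a+(d+1) = (a+d)+1 by omega, Finset.prod_Icc_succ_top (by omega : a+1 ≤ a+d+1),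
        prod_Icc_fac a d, Nat.factorial_succ]
    push_cast
    have : ((a : ℕ)! : ℚ) ≠ 0 := by positivity
    field_simp

lemma inner_prod (m j : ℕ) :
    (∏ i ∈ Icc 2 (j+1), ((2*m+2*(j+1)-i : ℕ) : ℚ)) = ((2*m+2*j)! : ℚ) / ((2*m+j)! : ℚ) := by
  rw [show (2*m+2*j : ℕ) = (2*m+j) + j by omega, ← prod_Icc_fac (2*m+j) j]
  apply Finset.prod_nbij' (fun i => 2*m+2*(j+1)-i) (fun v => 2*m+2*(j+1)-v)
  · intro a ha; simp only [Finset.mem_Icc] at ha ⊢; omega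
  · intro v hv; simp only [Finset.mem_Icc] at hv ⊢; omega
  · intro a ha; simp only [Finset.mem_Icc] at ha; omega
  · intro v hv; simp only [Finset.mem_Icc] at hv; omega
  · intro a ha; rfl

lemma prodform (m : ℕ) : ∀ n : ℕ,
    (∏ k ∈ range n, Uq m k k) * ((∏ j ∈ Icc 1 n, (2*j-2)! : ℕ) : ℚ) =
      ((∏ i ∈ range n, i ! : ℕ) : ℚ) *
        (∏ j ∈ Icc 2 n, ∏ i ∈ Icc 2 j, ((2*m+2*j-i : ℕ) : ℚ))
  | 0 => by simp
  | 1 => by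
    rw [show (1:ℕ) = 0+1 from rfl, Finset.prod_range_succ, Finset.prod_range_succ,
        show Icc 1 (0+1) = {1} from rfl, show Icc 2 (0+1) = ∅ from rfl]
    simp only [Finset.prod_range_zero, Finset.prod_singleton, Finset.prod_empty]
    rw [Uq, if_pos le_rfl, Nat.sub_self, Nat.choose_zero_right, Nat.cast_one, one_mul]
    norm_num
    exact ⟨factorial_ne_zero _, factorial_ne_zero _⟩
  | (n+2) => by
    have hrec0 := prodform m (n+1)
    rw [Finset.prod_range_succ (fun k => Uq m k k) (n+1),
        Finset.prod_Icc_succ_top (by omega : 1 ≤ (n+1)+1) (fun j => (2*j-2)!),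
        Finset.prod_range_succ (fun i => i !) (n+1),
        Finset.prod_Icc_succ_top (by omega : 2 ≤ (n+1)+1)
          (fun j => ∏ i ∈ Icc 2 j, ((2*m+2*j-i : ℕ) : ℚ))]
    push_cast
    have hrec := hrec0
    push_cast at hrec
    rw [inner_prod m (n+1)]
    set n' := n+1 with hn'
    have hd : Uq m n' n' = ((2*m+2*n')! : ℚ) * ((n')! : ℚ) / (((2*m+n')! : ℚ) * ((2*n')! : ℚ)) := by
      rw [Uq, if_pos le_rfl, Nat.sub_self, Nat.choose_zero_right, Nat.cast_one, one_mul]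
      push_cast
      have : ((m+n : ℕ)! : ℚ) ≠ 0 := by positivity
      field_simp
    rw [hd, show 2*(n'+1)-2 = 2*n' by omega]
    have n1 : ((2*m+n' : ℕ)! : ℚ) ≠ 0 := by positivity
    have n2 : ((2*n' : ℕ)! : ℚ) ≠ 0 := by positivity
    field_simp
    linear_combination hrec

end UpperHalfDet

open Finset in
/-- The determinant `det_{1≤i,j≤n} binomial(m+j-1, m-j+i)` equals
`(∏_{i=0}^{n-1} i!) · ∏_{2≤i≤j≤n} (2m+2j-i) / ∏_{j=1}^{n} (2j-2)!`.
(Entries with `m-j+i < 0` are zero.) -/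
theorem upper_half_det (n m : ℕ) (hn : 1 ≤ n) :
    Matrix.det (Matrix.of fun i j : Fin n =>
        if m + i.1 < j.1 then (0 : ℚ)
        else (Nat.choose (m + j.1) (m + i.1 - j.1) : ℚ)) =
      ((∏ i ∈ Finset.range n, Nat.factorial i : ℕ) : ℚ) *
        (∏ j ∈ Finset.Icc 2 n, ∏ i ∈ Finset.Icc 2 j, ((2 * m + 2 * j - i : ℕ) : ℚ)) /
        ((∏ j ∈ Finset.Icc 1 n, Nat.factorial (2 * j - 2) : ℕ) : ℚ) := by
  have hmat : (Matrix.of fun i j : Fin n =>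
        if m + i.1 < j.1 then (0 : ℚ)
        else (Nat.choose (m + j.1) (m + i.1 - j.1) : ℚ)) =
      (Matrix.of fun i k : Fin n => Lq m i.1 k.1) * (Matrix.of fun k j : Fin n => Uq m k.1 j.1) := by
    ext i j
    rw [Matrix.mul_apply]
    simp only [Matrix.of_apply]
    rw [Fin.sum_univ_eq_sum_range (fun k => Lq m i.1 k * Uq m k j.1) n]
    rw [← Finset.sum_subset (Finset.range_subset_range.2 (show i.1+1 ≤ n from i.2)) (by
      intro x _ hx
      simp only [Finset.mem_range] at hx
      rw [Lq_zero (show i.1 < x by omega), zero_mul])]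
    exact (entry m i.1 j.1).symm
  rw [hmat, Matrix.det_mul]
  have hL : (Matrix.of fun i k : Fin n => Lq m i.1 k.1).det = 1 := by
    rw [Matrix.det_of_lowerTriangular _ (by
      intro i j hij
      exact Lq_zero (show i.1 < j.1 from hij))]
    simp [Lq_diag]
  have hU : (Matrix.of fun k j : Fin n => Uq m k.1 j.1).det = ∏ k ∈ range n, Uq m k k := by
    rw [Matrix.det_of_upperTriangular (by
      intro k j hkj
      exact Uq_zero (show j.1 < k.1 from hkj))]
    simp only [Matrix.of_apply]
    exact Fin.prod_univ_eq_prod_range (fun k => Uq m k k) n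
  rw [hL, hU, one_mul]
  have hp := prodform m n
  have hden : ((∏ j ∈ Icc 1 n, (2*j-2)! : ℕ) : ℚ) ≠ 0 := by
    push_cast
    positivity
  rw [eq_div_iff hden]
  exact hp
end

section
/- Vandermonde's summation: for a nonnegative integer n and parameters a, c (with c avoiding nonpositive integers ≥ -(n-1)), the terminating hypergeometric sum ∑_{k=0}^{n} ((a)_k (-n)_k)/((c)_k k!) equals (c-a)_n / (c)_n, where (x)_k denotes the rising factorial x(x+1)···(x+k-1). -/
/-!
Writing `(x)^{(k)} = x(x-1)⋯(x-k+1)` for the falling factorial, `(-1)^k (a)_k = (-a)^{(k)}`,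
`(-n)_k / k! = (-1)^k C(n,k)` and `(c)_n / (c)_k = (c+k)_{n-k} = (c+n-1)^{(n-k)}`. Multiplied by
`(c)_n`, the sum becomes `∑ C(n,k) (-a)^{(k)} (c+n-1)^{(n-k)}`, which is `(c-a+n-1)^{(n)} = (c-a)_n`
by the binomial theorem for falling factorials (Mathlib's `Ring.descPochhammer_smeval_add`).
-/

open Finset Polynomial

/-- The rising factorial `(x)_k = x(x+1)⋯(x+k-1)`. -/
def rf (x : ℚ) (k : ℕ) : ℚ := ∏ i ∈ Finset.range k, (x + i)

lemma rf_add (x : ℚ) (k m : ℕ) : rf x (k + m) = rf x k * rf (x + k) m := by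
  simp only [rf, prod_range_add, Nat.cast_add, add_assoc]

lemma rf_ne_zero {c : ℚ} {n : ℕ} (hc : ∀ k : ℕ, k < n → c + k ≠ 0) : rf c n ≠ 0 :=
  prod_ne_zero_iff.mpr fun k hk => hc k (mem_range.mp hk)

lemma descPochhammer_smeval_eq_prod_range (x : ℚ) (k : ℕ) :
    (descPochhammer ℤ k).smeval x = ∏ j ∈ range k, (x - j) := by
  induction k with
  | zero => simp
  | succ k ih =>
    simp [descPochhammer_succ_right, smeval_mul, ih, prod_range_succ, smeval_sub, smeval_natCast]

lemma rf_eq_descPochhammer_smeval (x : ℚ) (k : ℕ) :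
    rf x k = (descPochhammer ℤ k).smeval (x + k - 1) := by
  rw [descPochhammer_smeval_eq_prod_range, rf, ← prod_range_reflect]
  refine prod_congr rfl fun j hj => ?_
  rw [show k - 1 - j = k - (j + 1) by omega, Nat.cast_sub (mem_range.mp hj)]
  push_cast
  ring

lemma descPochhammer_smeval_neg (x : ℚ) (k : ℕ) :
    (descPochhammer ℤ k).smeval (-x) = (-1) ^ k * rf x k := by
  calc (descPochhammer ℤ k).smeval (-x) = ∏ j ∈ range k, -(x + j) := by
        rw [descPochhammer_smeval_eq_prod_range]
        exact prod_congr rfl fun j _ => by ring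
    _ = (-1) ^ k * rf x k := by rw [prod_neg, card_range, rf]

lemma rf_neg_natCast (n k : ℕ) : rf (-n) k = (-1) ^ k * (k.factorial * n.choose k) := by
  have h := descPochhammer_smeval_neg (-n) k
  rw [neg_neg, descPochhammer_smeval_eq_descFactorial, Nat.descFactorial_eq_factorial_mul_choose,
    Nat.cast_mul] at h
  rw [h, ← mul_assoc, ← mul_pow, neg_one_mul, neg_neg, one_pow, one_mul]

lemma rf_sub_eq_sum (a c : ℚ) (n : ℕ) :
    rf (c - a) n = ∑ k ∈ range (n + 1), (-1) ^ k * n.choose k * rf a k * rf (c + k) (n - k) := by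
  rw [rf_eq_descPochhammer_smeval, show c - a + n - 1 = -a + (c + n - 1) by ring,
    Ring.descPochhammer_smeval_add n (Commute.all _ _), Nat.sum_antidiagonal_eq_sum_range_succ_mk]
  refine sum_congr rfl fun k hk => ?_
  have hkn : k ≤ n := Nat.lt_succ_iff.mp (mem_range.mp hk)
  rw [descPochhammer_smeval_neg, rf_eq_descPochhammer_smeval (c + k), Nat.cast_sub hkn,
    show c + k + ((n : ℚ) - k) - 1 = c + n - 1 by ring]
  ring

/-- Chu–Vandermonde summation: for a nonnegative integer `n` and parameters
`a, c` with `c` avoiding the nonpositive integers `0, -1, …, -(n-1)`,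
`∑_{k=0}^{n} (a)_k (-n)_k / ((c)_k k!) = (c-a)_n / (c)_n`. -/
theorem chu_vandermonde (n : ℕ) (a c : ℚ) (hc : ∀ k : ℕ, k < n → c + k ≠ 0) :
    ∑ k ∈ Finset.range (n + 1),
        rf a k * rf (-(n : ℚ)) k / (rf c k * (Nat.factorial k : ℚ)) =
      rf (c - a) n / rf c n := by
  rw [eq_div_iff (rf_ne_zero hc), sum_mul, rf_sub_eq_sum]
  refine sum_congr rfl fun k hk => ?_
  have hsplit : rf c n = rf c k * rf (c + k) (n - k) := by
    rw [← rf_add, Nat.add_sub_cancel' (Nat.lt_succ_iff.mp (mem_range.mp hk))]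
  obtain ⟨hck, -⟩ := mul_ne_zero_iff.mp (hsplit ▸ rf_ne_zero hc)
  rw [hsplit, rf_neg_natCast]
  field_simp
end

section
/- For nonnegative integers n, s, k, l with 0 ≤ s ≤ n-1, i ≠ s+1, 1 ≤ k ≤ n-2, 0 ≤ l ≤ k, l ≥ 2k-n+1, and any row index i with 1 ≤ i ≤ n, i ≠ s+1, the alternating binomial combination ∑_{j=0}^{l} binomial(l,j) · B_{i, n+2l-2k-j}(m) evaluated at m = -k - 1/2 equals 0, where B_{ij}(m) = (n+2+j-2i)_{n-j}·(i+m+1-j)_{j-1}·(m+(n+1-j)/2). -/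
/-- The matrix entry `B_{ij}(m) = (n+2+j-2i)_{n-j}·(i+m+1-j)_{j-1}·(m+(n+1-j)/2)`
(row `i ≠ s+1`), evaluated at `m = -k-1/2`. -/
def Bhalf (n i k j : ℕ) : ℚ :=
  rf ((n : ℚ) + 2 + j - 2 * i) (n - j) *
    rf ((i : ℚ) + (-(k : ℚ) - 1 / 2) + 1 - j) (j - 1) *
    ((-(k : ℚ) - 1 / 2) + ((n : ℚ) + 1 - j) / 2)

/-- The falling factorial `x(x-1)⋯(x-k+1)`. -/
def ffq (x : ℚ) (k : ℕ) : ℚ := ∏ i ∈ Finset.range k, (x - i)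

lemma ffq_congr {a b : ℚ} (m : ℕ) (h : a = b) : ffq a m = ffq b m := by rw [h]

lemma ffq_add (x : ℚ) (a b : ℕ) : ffq x (a + b) = ffq x a * ffq (x - a) b := by
  rw [ffq, Finset.prod_range_add]
  congr 1
  refine Finset.prod_congr rfl fun i _ => ?_
  push_cast; ring

lemma ffq_succ_left (x : ℚ) (k : ℕ) : ffq x (k + 1) = x * ffq (x - 1) k := by
  rw [show k + 1 = 1 + k from by omega, ffq_add]; simp [ffq]

lemma rf_eq_ffq (x : ℚ) (m : ℕ) : rf x m = ffq (x + m - 1) m := by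
  rw [rf, ffq, ← Finset.prod_range_reflect]
  refine Finset.prod_congr rfl fun i hi => ?_
  rw [Finset.mem_range] at hi
  have : ((m - 1 - i : ℕ) : ℚ) = (m : ℚ) - 1 - i := by
    have h1 : 1 + i ≤ m := by omega
    push_cast [Nat.sub_sub, Nat.cast_sub h1]; ring
  rw [this]; ring

lemma ffq_eq (x : ℚ) (k : ℕ) : ffq x k = (descPochhammer ℤ k).smeval x := by
  induction k with
  | zero => simp [ffq]
  | succ k ih =>
    rw [ffq, Finset.prod_range_succ, ← ffq, ih, descPochhammer_succ_right,
      Polynomial.smeval_mul, Polynomial.smeval_sub, Polynomial.smeval_X,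
      Polynomial.smeval_natCast]
    push_cast
    ring

lemma ffq_vandermonde (x y : ℚ) (l : ℕ) :
    ∑ t ∈ Finset.range (l + 1), (l.choose t : ℚ) * (ffq x t * ffq y (l - t))
      = ffq (x + y) l := by
  rw [ffq_eq, Ring.descPochhammer_smeval_add l (Commute.all x y),
    Finset.Nat.sum_antidiagonal_eq_sum_range_succ_mk]
  exact Finset.sum_congr rfl fun t ht => by rw [ffq_eq, ffq_eq]

lemma ffq_weighted (x y : ℚ) (m : ℕ) :
    ∑ t ∈ Finset.range (m + 2), (((m+1).choose t : ℚ) * t) * (ffq x t * ffq y (m + 1 - t))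
      = ((m : ℚ) + 1) * x * ffq (x + y - 1) m := by
  rw [Finset.sum_range_succ']
  have step : ∀ t ∈ Finset.range (m + 1),
      (((m+1).choose (t+1) : ℚ) * ((t:ℕ)+1:ℕ)) * (ffq x (t+1) * ffq y (m + 1 - (t+1)))
        = ((m:ℚ) + 1) * x * ((m.choose t : ℚ) * (ffq (x-1) t * ffq y (m - t))) := by
    intro t ht
    have hc : ((m+1).choose (t+1)) * (t+1) = (m+1) * m.choose t := by
      rw [← Nat.add_one_mul_choose_eq]
    have hc' : (((m+1).choose (t+1) : ℚ)) * ((t:ℚ)+1) = ((m:ℚ)+1) * (m.choose t : ℚ) := by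
      exact_mod_cast congrArg (Nat.cast : ℕ → ℚ) hc
    rw [ffq_succ_left, show m + 1 - (t+1) = m - t from by omega]
    push_cast
    linear_combination (x * (ffq (x-1) t * ffq y (m-t))) * hc'
  rw [Finset.sum_congr rfl step, ← Finset.mul_sum, ffq_vandermonde (x-1) y m,
    show x - 1 + y = x + y - 1 from by ring]
  simp

lemma core (x : ℚ) (l : ℕ) :
    ∑ t ∈ Finset.range (l + 1),
        (l.choose t : ℚ) * (((t:ℚ) - 2 * l) * (ffq x t * ffq (-x/2) (l - t))) = 0 := by
  cases l with
  | zero => simp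
  | succ m =>
    have expand : ∀ t ∈ Finset.range (m + 2),
        ((m+1).choose t : ℚ) * (((t:ℚ) - 2 * (m+1:ℕ)) * (ffq x t * ffq (-x/2) (m+1 - t)))
          = (((m+1).choose t : ℚ) * t) * (ffq x t * ffq (-x/2) (m + 1 - t))
            - (2 * ((m:ℚ)+1)) * (((m+1).choose t : ℚ) * (ffq x t * ffq (-x/2) (m+1 - t))) := by
      intro t ht; push_cast; ring
    rw [Finset.sum_congr rfl expand, Finset.sum_sub_distrib, ffq_weighted, ← Finset.mul_sum,
      ffq_vandermonde x (-x/2) (m+1)]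
    rw [show x + -x/2 - 1 = x/2 - 1 by ring, show x + -x/2 = x/2 by ring,
      ffq_succ_left (x/2) m]
    ring

/-- The key linear relation for the "half-integral" factors: for
`1 ≤ k ≤ n-2`, `0 ≤ l ≤ k`, `l ≥ 2k-n+1`, and a row `i ≠ s+1`,
`∑_{j=0}^{l} C(l,j) · B_{i, n+2l-2k-j}(m)` vanishes at `m = -k-1/2`. -/
theorem half_integral_relation (n s k l i : ℕ) (hs : s < n)
    (hk1 : 1 ≤ k) (hk2 : k ≤ n - 2) (hl1 : l ≤ k) (hl2 : 2 * k + 1 ≤ n + l)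
    (hi1 : 1 ≤ i) (hi2 : i ≤ n) (his : i ≠ s + 1) :
    ∑ jj ∈ Finset.range (l + 1),
        (Nat.choose l jj : ℚ) * Bhalf n i k (n + 2 * l - 2 * k - jj) = 0 := by
  have hn : k + 2 ≤ n := by omega
  set X : ℚ := 2*(n:ℚ)+1-2*(i:ℚ)-2*(k:ℚ)+2*(l:ℚ) with hX
  have key : ∀ jj ∈ Finset.range (l + 1),
      (Nat.choose l jj : ℚ) * Bhalf n i k (n + 2 * l - 2 * k - jj)
        = (ffq (2*(n:ℚ)+1-2*(i:ℚ)) (2*(k-l)) * ffq ((i:ℚ)-(k:ℚ)-3/2) (n+l-2*k-1) * (1/2)) *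
          ((Nat.choose l jj : ℚ) *
            (((jj:ℚ) - 2 * l) * (ffq X jj * ffq (-X/2) (l - jj)))) := by
    intro jj hjj
    rw [Finset.mem_range] at hjj
    have hjj' : jj ≤ l := by omega
    have hA : n + 2*l - 2*k - jj + (2*k + jj) = n + 2*l := by omega
    have ecast : ((n + 2*l - 2*k - jj : ℕ) : ℚ) = (n:ℚ) + 2*l - 2*k - jj := by
      have := congrArg (Nat.cast : ℕ → ℚ) hA
      push_cast at this
      linarith
    have e2 : n - (n + 2*l - 2*k - jj) = 2*(k-l) + jj := by omega
    have e3 : (n + 2*l - 2*k - jj) - 1 = (n + l - 2*k - 1) + (l - jj) := by omega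
    have e5 : ((n + l - 2*k - 1 : ℕ) : ℚ) = (n:ℚ) + l - 2*k - 1 := by
      have hB : n + l - 2*k - 1 + (2*k + 1) = n + l := by omega
      have := congrArg (Nat.cast : ℕ → ℚ) hB
      push_cast at this
      linarith
    have F1 : rf ((n : ℚ) + 2 + ((n + 2*l - 2*k - jj : ℕ) : ℚ) - 2 * i)
          (n - (n + 2*l - 2*k - jj))
        = ffq (2*(n:ℚ)+1-2*(i:ℚ)) (2*(k-l)) * ffq X jj := by
      rw [rf_eq_ffq, e2, ffq_add]
      congr 1
      · apply ffq_congr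
        rw [ecast]
        push_cast [Nat.cast_sub hl1]
        ring
      · apply ffq_congr
        rw [ecast, hX]
        push_cast [Nat.cast_sub hl1]
        ring
    have F2 : rf ((i : ℚ) + (-(k : ℚ) - 1 / 2) + 1 - ((n + 2*l - 2*k - jj : ℕ) : ℚ))
          ((n + 2*l - 2*k - jj) - 1)
        = ffq ((i:ℚ)-(k:ℚ)-3/2) (n+l-2*k-1) * ffq (-X/2) (l - jj) := by
      rw [rf_eq_ffq, e3, ffq_add]
      congr 1
      · apply ffq_congr
        rw [ecast]
        push_cast [Nat.cast_sub hjj', Nat.cast_sub hl1, e5]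
        ring
      · apply ffq_congr
        rw [ecast, hX]
        push_cast [Nat.cast_sub hjj', Nat.cast_sub hl1]
        rw [e5]
        ring
    have F3 : (-(k : ℚ) - 1 / 2) + ((n : ℚ) + 1 - ((n + 2*l - 2*k - jj : ℕ) : ℚ)) / 2
        = ((jj:ℚ) - 2 * l) / 2 := by
      rw [ecast]; ring
    simp only [Bhalf]
    rw [F1, F2, F3]
    ring
  rw [Finset.sum_congr rfl key, ← Finset.mul_sum, core X l, mul_zero]
end

section
/- For integers n ≥ 1 and 0 ≤ s ≤ n-1, and row indices i with 2i ≥ n+2 and i ≠ s+1, the polynomial (m+1-i+n)_{2i-n-1} (a product of 2i-n-1 consecutive linear factors in m) divides every entry B_{ij}(m) = (n+2+j-2i)_{n-j}·(i+m+1-j)_{j-1}·(m+(n+1-j)/2) of row i, for all j with 1 ≤ j ≤ n; moreover the product over all such rows of these pulled-out factors equals ∏_{k=1}^{n-1}(m+k)^{min(k,n-k)}. -/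
open Polynomial

/-- The rising factorial `(x)_k = x(x+1)⋯(x+k-1)` in `ℚ`. -/
def rfq (x : ℚ) (k : ℕ) : ℚ := ∏ i ∈ Finset.range k, (x + i)

/-- The rising factorial `(p)_k = p(p+1)⋯(p+k-1)` of a polynomial. -/
noncomputable def rfP (p : Polynomial ℚ) (k : ℕ) : Polynomial ℚ :=
  ∏ i ∈ Finset.range k, (p + Polynomial.C (i : ℚ))

lemma rfP_add (p : Polynomial ℚ) (d k : ℕ) :
    rfP p (d + k) = rfP p d * rfP (p + C (d : ℚ)) k := by
  unfold rfP
  rw [Finset.prod_range_add]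
  congr 1
  refine Finset.prod_congr rfl fun t _ => ?_
  push_cast
  rw [C_add, add_assoc]

lemma rfP_nat (b K : ℕ) (hb : 1 ≤ b) :
    rfP (X + C (b : ℚ)) K = ∏ k ∈ Finset.Icc b (b + K - 1), (X + C (k : ℚ)) := by
  induction K with
  | zero =>
    rw [Finset.Icc_eq_empty_of_lt (by omega : b + 0 - 1 < b)]
    simp [rfP]
  | succ K ih =>
    have h1 : b + (K + 1) - 1 = (b + K - 1) + 1 := by omega
    have h2 : b ≤ (b + K - 1) + 1 := by omega
    rw [h1, Finset.prod_Icc_succ_top h2, ← ih]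
    have h3 : ((b + K - 1) + 1 : ℕ) = b + K := by omega
    rw [rfP, rfP, Finset.prod_range_succ, h3]
    push_cast
    rw [C_add]
    ring

/-- For rows `i` with `2i ≥ n+2`, `i ≠ s+1`, the polynomial
`(m+1-i+n)_{2i-n-1}` divides every entry
`B_{ij}(m) = (n+2+j-2i)_{n-j}·(i+m+1-j)_{j-1}·(m+(n+1-j)/2)` of row `i`
(as polynomials in `m`); moreover the product over all rows with `2i ≥ n+2`
of these pulled-out factors equals `∏_{k=1}^{n-1}(m+k)^{min(k,n-k)}`. -/
theorem integral_factors_rows (n s : ℕ) (hn : 1 ≤ n) (hs : s < n) :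
    (∀ i j : ℕ, 1 ≤ i → i ≤ n → 1 ≤ j → j ≤ n → n + 2 ≤ 2 * i → i ≠ s + 1 →
      rfP (X + C ((n : ℚ) + 1 - i)) (2 * i - n - 1) ∣
        C (rfq ((n : ℚ) + 2 + j - 2 * i) (n - j)) *
          rfP (X + C ((i : ℚ) + 1 - j)) (j - 1) * (X + C (((n : ℚ) + 1 - j) / 2))) ∧
    (∏ i ∈ (Finset.Icc 1 n).filter (fun i => n + 2 ≤ 2 * i),
        rfP (X + C ((n : ℚ) + 1 - i)) (2 * i - n - 1)) =
      ∏ k ∈ Finset.Icc 1 (n - 1), (X + C (k : ℚ)) ^ min k (n - k) := by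
  constructor
  · intro i j h1i hin h1j hjn h2i _
    rcases lt_trichotomy (j + n + 1) (2 * i) with hj | hj | hj
    · -- the constant rising factorial vanishes
      have hr : rfq ((n : ℚ) + 2 + j - 2 * i) (n - j) = 0 := by
        unfold rfq
        apply Finset.prod_eq_zero (i := 2 * i - (n + 2 + j))
        · rw [Finset.mem_range]; omega
        · have : ((2 * i - (n + 2 + j) : ℕ) : ℚ) = 2 * i - (n + 2 + j) := by
            push_cast [Nat.cast_sub (by omega : n + 2 + j ≤ 2 * i)]; ring
          rw [this]; ring
      rw [hr]
      simp
    · -- j = 2i - n - 1 : use the extra linear factor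
      have hsplit : 2 * i - n - 1 = 1 + (j - 1) := by omega
      rw [hsplit, rfP_add]
      have e1 : rfP (X + C ((n : ℚ) + 1 - i)) 1 = X + C (((n : ℚ) + 1 - j) / 2) := by
        have hjq : (j : ℚ) = 2 * i - n - 1 := by
          have : (j : ℚ) + n + 1 = 2 * i := by exact_mod_cast congrArg (Nat.cast : ℕ → ℚ) hj
          linarith
        simp only [rfP, Finset.prod_range_one, Nat.cast_zero, map_zero, add_zero]
        rw [hjq]; ring_nf
      have e2 : (X + C ((n : ℚ) + 1 - i) + C ((1 : ℕ) : ℚ)) = X + C ((i : ℚ) + 1 - j) := by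
        have hjq : (j : ℚ) = 2 * i - n - 1 := by
          have : (j : ℚ) + n + 1 = 2 * i := by exact_mod_cast congrArg (Nat.cast : ℕ → ℚ) hj
          linarith
        rw [hjq, add_assoc, ← C_add]; push_cast; ring_nf
      rw [e1, e2]
      exact ⟨C (rfq ((n : ℚ) + 2 + j - 2 * i) (n - j)), by ring⟩
    · -- j ≥ 2i - n : the middle rising factorial suffices
      have hd : (n + j - 2 * i) + (2 * i - n - 1) = j - 1 := by omega
      have key : rfP (X + C ((i : ℚ) + 1 - j)) (j - 1) =
          rfP (X + C ((i : ℚ) + 1 - j)) (n + j - 2 * i) *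
            rfP (X + C ((n : ℚ) + 1 - i)) (2 * i - n - 1) := by
        rw [← hd, rfP_add]
        congr 2
        have : ((n + j - 2 * i : ℕ) : ℚ) = n + j - 2 * i := by
          push_cast [Nat.cast_sub (by omega : 2 * i ≤ n + j)]; ring
        rw [this, add_assoc, ← C_add]; ring_nf
      rw [key]
      exact ((dvd_mul_left _ _).mul_left _).mul_right _
  · -- the product identity
    have step1 : (∏ i ∈ (Finset.Icc 1 n).filter (fun i => n + 2 ≤ 2 * i),
        rfP (X + C ((n : ℚ) + 1 - i)) (2 * i - n - 1)) =
        ∏ i ∈ (Finset.Icc 1 n).filter (fun i => n + 2 ≤ 2 * i),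
          ∏ k ∈ Finset.Icc (n + 1 - i) (i - 1), (X + C (k : ℚ)) := by
      refine Finset.prod_congr rfl fun i hi => ?_
      simp only [Finset.mem_filter, Finset.mem_Icc] at hi
      obtain ⟨⟨h1i, hin⟩, h2i⟩ := hi
      have hcast : ((n + 1 - i : ℕ) : ℚ) = (n : ℚ) + 1 - i := by
        push_cast [Nat.cast_sub (by omega : i ≤ n + 1)]; ring
      have hend : n + 1 - i + (2 * i - n - 1) - 1 = i - 1 := by omega
      rw [← hcast, rfP_nat (n + 1 - i) (2 * i - n - 1) (by omega), hend]
    rw [step1]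
    have step2 : (∏ i ∈ (Finset.Icc 1 n).filter (fun i => n + 2 ≤ 2 * i),
          ∏ k ∈ Finset.Icc (n + 1 - i) (i - 1), (X + C (k : ℚ))) =
        ∏ k ∈ Finset.Icc 1 (n - 1),
          ∏ _i ∈ Finset.Icc (max (k + 1) (n + 1 - k)) n, (X + C (k : ℚ)) := by
      refine Finset.prod_comm' fun i k => ?_
      simp only [Finset.mem_filter, Finset.mem_Icc, le_max_iff, max_le_iff]
      omega
    rw [step2]
    refine Finset.prod_congr rfl fun k hk => ?_
    simp only [Finset.mem_Icc] at hk
    rw [Finset.prod_const, Nat.card_Icc]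
    congr 1
    omega
end

section
/- The leading coefficient (in m) of the determinant det_{1≤i,j≤n} B_{ij}(m), where B_{ij}(m) = (n+2+j-2i)_{n-j}·(i+m+1-j)_{j-1}·(m+(n+1-j)/2) for i ≠ s+1 and B_{s+1,j}(m) = (n+1+j-2s)_{n-j}·(s+m+1-j)_{j-1}, equals 2^{binom(n-1,2)} · (∏_{i=0}^{n-1} i!) · (2n-2s-1)!! · (2s-1)!! / ((n-s-1)! · s!), and the determinant has degree binom(n+1,2) - 1 as a polynomial in m. -/
/-
Each entry factors as `C (A i j) * q i j`, where `q i j` is a monic polynomial in `m` of degree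
`d i + j`, with `d i = 0` on row `s` and `1` elsewhere. Every term of the
Leibniz expansion then has the same degree `∑ d + ∑ j`, and its top coefficient is the
corresponding term of `det A`; hence the leading coefficient is `det A` once that is nonzero.
Column `j` of `A` is a monic polynomial of degree `n - 1 - j` evaluated at the nodes `x i`, so
`det A = ∏_{i<j} (x i - x j)` by Vandermonde. Splitting off the pairs that contain `s`, this
product differs from the one for the evenly spaced nodes `-2 i` (a product of factorials) only by
two products of odd numbers.
-/

open Polynomial

/-- The odd double factorial `(2r-1)!! = 1·3·5⋯(2r-1)` (with `(-1)!! = 1`). -/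
def dfOdd (r : ℕ) : ℕ := ∏ i ∈ Finset.range r, (2 * i + 1)

/-- The superfactorial `∏_{i=0}^{n-1} i!`. -/
def sf (n : ℕ) : ℕ := ∏ i ∈ Finset.range n, Nat.factorial i

open Finset

theorem Nat.add_one_choose_two (n : ℕ) : (n + 1).choose 2 = n.choose 2 + n := by
  have h := Nat.choose_succ_succ' n 1
  simp only [Nat.reduceAdd, Nat.choose_one_right] at h
  omega

theorem choose_two_eq_add {n s : ℕ} (hs : s < n) :
    n.choose 2 = (n - 1).choose 2 + (n - 1 - s) + s := by
  obtain ⟨m, rfl⟩ : ∃ m, n = m + 1 := ⟨n - 1, by omega⟩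
  rw [Nat.add_one_choose_two, Nat.add_sub_cancel]
  omega

theorem sum_range_reflect_id (n : ℕ) : ∑ i ∈ range n, (n - 1 - i) = n.choose 2 := by
  rw [sum_range_reflect (fun i => i) n, sum_range_id, Nat.choose_two_right]

theorem prod_range_reflect_cast {M : Type*} [CommMonoid M] (g : ℚ → M) (s : ℕ) :
    ∏ i ∈ range s, g (s - 1 - i) = ∏ i ∈ range s, g i := by
  rw [← prod_range_reflect (fun i : ℕ => g i)]
  refine prod_congr rfl fun i hi => ?_
  rw [mem_range] at hi
  rw [Nat.cast_sub (by omega), Nat.cast_sub (by omega), Nat.cast_one]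

theorem prod_range_two_mul_add_two (t : ℕ) :
    ∏ k ∈ range t, (2 * (k : ℚ) + 2) = 2 ^ t * t.factorial := by
  rw [← prod_range_add_one_eq_factorial, ← card_range t, ← prod_const, card_range]
  push_cast
  rw [← prod_mul_distrib]
  exact prod_congr rfl fun k _ => by ring

theorem dfOdd_eq_prod (r : ℕ) : (dfOdd r : ℚ) = ∏ i ∈ range r, (2 * (i : ℚ) + 1) := by
  push_cast [dfOdd]
  rfl

theorem dfOdd_ne_zero (r : ℕ) : dfOdd r ≠ 0 :=
  prod_ne_zero_iff.mpr fun i _ => by omega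

theorem sf_eq_prod_reflect (n : ℕ) : sf n = ∏ i ∈ range n, (n - 1 - i).factorial :=
  (prod_range_reflect Nat.factorial n).symm

theorem sf_ne_zero (n : ℕ) : sf n ≠ 0 :=
  prod_ne_zero_iff.mpr fun i _ => Nat.factorial_ne_zero i

theorem Fin.prod_Ioi_val {M : Type*} [CommMonoid M] {n : ℕ} (i : Fin n) (g : ℕ → M) :
    ∏ j ∈ Ioi i, g j = ∏ j ∈ Ioo (i : ℕ) n, g j := by
  rw [← Fin.map_valEmbedding_Ioi, prod_map]
  rfl

theorem Fin.prod_Iio_val {M : Type*} [CommMonoid M] {n : ℕ} (i : Fin n) (g : ℕ → M) :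
    ∏ j ∈ Iio i, g j = ∏ j ∈ range i, g j := by
  rw [← Nat.Iio_eq_range, ← Fin.map_valEmbedding_Iio, prod_map]
  rfl

theorem prod_Ioo_eq_prod_range {M : Type*} [CommMonoid M] (g : ℕ → M) (i n : ℕ) :
    ∏ j ∈ Ioo i n, g j = ∏ k ∈ range (n - 1 - i), g (i + 1 + k) := by
  rw [← Ico_add_one_left_eq_Ioo, prod_Ico_eq_prod_range, Nat.sub_sub, add_comm 1 i]

theorem prod_Ioi_rev {M : Type*} [CommMonoid M] {n : ℕ} (f : Fin n → Fin n → M) :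
    ∏ i : Fin n, ∏ j ∈ Ioi i, f j.rev i.rev = ∏ i : Fin n, ∏ j ∈ Ioi i, f i j := by
  calc ∏ i : Fin n, ∏ j ∈ Ioi i, f j.rev i.rev
      = ∏ i : Fin n, ∏ j ∈ Iio i, f j i := by
        refine Fintype.prod_equiv Fin.revPerm _ _ fun i => ?_
        rw [Fin.revPerm_apply, ← Fin.map_revPerm_Ioi, prod_map]
        rfl
    _ = ∏ i : Fin n, ∏ j ∈ Ioi i, f i j := prod_comm' (by simp)

theorem prod_Ioi_eq_mul_prod_erase {α M : Type*} [CommMonoid M] [Fintype α] [LinearOrder α]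
    [LocallyFiniteOrderTop α] [LocallyFiniteOrderBot α] (f : α → α → M) (p : α) :
    ∏ i, ∏ j ∈ Ioi i, f i j = (∏ j ∈ Ioi p, f p j) * (∏ i ∈ Iio p, f i p) *
      ∏ i ∈ univ.erase p, ∏ j ∈ (Ioi i).erase p, f i j := by
  have hrow (i : α) : ∏ j ∈ Ioi i, f i j =
      (if i < p then f i p else 1) * ∏ j ∈ (Ioi i).erase p, f i j := by
    split_ifs with h
    · exact (mul_prod_erase _ _ (mem_Ioi.mpr h)).symm
    · rw [erase_eq_of_notMem (by simpa using h), one_mul]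
  have hcol : ∏ i ∈ univ.erase p, (if i < p then f i p else 1) = ∏ i ∈ Iio p, f i p := by
    rw [← prod_filter]
    congr 1
    ext i
    simpa using ne_of_lt
  rw [← mul_prod_erase univ _ (mem_univ p), mul_assoc, prod_congr rfl fun i _ => hrow i,
    prod_mul_distrib, hcol]

section DetOfMonicEntries

variable {R ι : Type*} [CommRing R] [Fintype ι]

theorem natDegree_prod_perm_of_monic {q : ι → ι → R[X]} {d e : ι → ℕ}
    (hq : ∀ i j, (q i j).Monic) (hdeg : ∀ i j, (q i j).natDegree = d i + e j)
    (σ : Equiv.Perm ι) : (∏ i, q (σ i) i).natDegree = ∑ i, d i + ∑ i, e i := by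
  rw [natDegree_prod_of_monic _ _ fun i _ => hq _ _]
  simp only [hdeg, sum_add_distrib, Equiv.sum_comp σ d]

variable [DecidableEq ι]

theorem det_of_C_mul (A : Matrix ι ι R) (q : ι → ι → R[X]) :
    (Matrix.of fun i j => C (A i j) * q i j).det =
      ∑ σ : Equiv.Perm ι, C (Equiv.Perm.sign σ • ∏ i, A (σ i) i) * ∏ i, q (σ i) i := by
  rw [Matrix.det_apply]
  refine sum_congr rfl fun σ _ => ?_
  simp [prod_mul_distrib, ← map_prod, Units.smul_def, mul_assoc]

theorem natDegree_det_of_C_mul_monic_le (A : Matrix ι ι R) {q : ι → ι → R[X]} {d e : ι → ℕ}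
    (hq : ∀ i j, (q i j).Monic) (hdeg : ∀ i j, (q i j).natDegree = d i + e j) :
    (Matrix.of fun i j => C (A i j) * q i j).det.natDegree ≤ ∑ i, d i + ∑ i, e i := by
  rw [det_of_C_mul]
  refine natDegree_sum_le_of_forall_le _ _ fun σ _ => ?_
  exact natDegree_C_mul_le _ _ |>.trans (natDegree_prod_perm_of_monic hq hdeg σ).le

theorem coeff_det_of_C_mul_monic (A : Matrix ι ι R) {q : ι → ι → R[X]} {d e : ι → ℕ}
    (hq : ∀ i j, (q i j).Monic) (hdeg : ∀ i j, (q i j).natDegree = d i + e j) :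
    (Matrix.of fun i j => C (A i j) * q i j).det.coeff (∑ i, d i + ∑ i, e i) = A.det := by
  rw [det_of_C_mul, finsetSum_coeff, Matrix.det_apply]
  refine sum_congr rfl fun σ _ => ?_
  rw [coeff_C_mul, ← natDegree_prod_perm_of_monic hq hdeg σ,
    (monic_prod_of_monic _ _ fun i _ => hq _ _).coeff_natDegree, mul_one]

theorem natDegree_det_of_C_mul_monic {A : Matrix ι ι R} {q : ι → ι → R[X]} {d e : ι → ℕ}
    (hq : ∀ i j, (q i j).Monic) (hdeg : ∀ i j, (q i j).natDegree = d i + e j)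
    (hA : A.det ≠ 0) :
    (Matrix.of fun i j => C (A i j) * q i j).det.natDegree = ∑ i, d i + ∑ i, e i :=
  (natDegree_det_of_C_mul_monic_le A hq hdeg).antisymm
    (le_natDegree_of_ne_zero (by rwa [coeff_det_of_C_mul_monic A hq hdeg]))

theorem leadingCoeff_det_of_C_mul_monic {A : Matrix ι ι R} {q : ι → ι → R[X]} {d e : ι → ℕ}
    (hq : ∀ i j, (q i j).Monic) (hdeg : ∀ i j, (q i j).natDegree = d i + e j)
    (hA : A.det ≠ 0) : (Matrix.of fun i j => C (A i j) * q i j).det.leadingCoeff = A.det := by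
  rw [leadingCoeff, natDegree_det_of_C_mul_monic hq hdeg hA, coeff_det_of_C_mul_monic A hq hdeg]

end DetOfMonicEntries

theorem det_eval_of_monic_natDegree_rev {R : Type*} [CommRing R] {n : ℕ} (x : Fin n → R)
    {p : Fin n → R[X]} (hp : ∀ j, (p j).Monic) (hdeg : ∀ j, (p j).natDegree = n - 1 - j) :
    (Matrix.of fun i j => (p j).eval (x i)).det = ∏ i, ∏ j ∈ Ioi i, (x i - x j) := by
  have hrev : (Matrix.of fun i j => (p j).eval (x i)) =
      (Matrix.of fun i j => (p j.rev).eval (x i.rev)).submatrix Fin.revPerm Fin.revPerm := by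
    ext i j; simp
  rw [hrev, Matrix.det_submatrix_equiv_self,
    ← Matrix.det_eval_matrixOfPolynomials_eq_det_vandermonde _ _
      (fun j => by rw [hdeg, Fin.val_rev]; omega) (fun j => hp _),
    Matrix.det_vandermonde]
  exact prod_Ioi_rev fun i j => x i - x j

theorem rfP_X_add_C (a : ℚ) (k : ℕ) : rfP (X + C a) k = ∏ i ∈ range k, (X + C (a + i)) :=
  prod_congr rfl fun i _ => by rw [add_assoc, ← C_add]

theorem monic_rfP_X_add_C (a : ℚ) (k : ℕ) : (rfP (X + C a) k).Monic := by
  rw [rfP_X_add_C]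
  exact monic_prod_of_monic _ _ fun i _ => monic_X_add_C _

theorem natDegree_rfP_X_add_C (a : ℚ) (k : ℕ) : (rfP (X + C a) k).natDegree = k := by
  rw [rfP_X_add_C, natDegree_prod_of_monic _ _ fun i _ => monic_X_add_C _]
  simp only [natDegree_X_add_C, sum_const, card_range, smul_eq_mul, mul_one]

theorem eval_rfP_X_add_C (a z : ℚ) (k : ℕ) : (rfP (X + C a) k).eval z = rfq (z + a) k := by
  simp [rfP, rfq, eval_prod, add_assoc]

theorem det_rfq_eq_prod_sub {n : ℕ} (x : Fin n → ℚ) :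
    (Matrix.of fun i j : Fin n => rfq (x i + n + j + 1) (n - (j + 1))).det =
      ∏ i, ∏ j ∈ Ioi i, (x i - x j) := by
  have hcol (i j : Fin n) : rfq (x i + n + j + 1) (n - (j + 1)) =
      (rfP (X + C ((n : ℚ) + j + 1)) (n - (j + 1))).eval (x i) := by
    rw [eval_rfP_X_add_C, ← add_assoc, ← add_assoc]
  simp only [hcol]
  exact det_eval_of_monic_natDegree_rev x (fun j => monic_rfP_X_add_C _ _)
    (fun j => by rw [natDegree_rfP_X_add_C]; omega)

/-- The paper's nodes `x_i = 2 - 2i` (`i ≠ s + 1`), `x_{s+1} = 1 - 2s`, shifted to 0-based `i`. -/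
def node (s i : ℕ) : ℚ := if i = s then 1 - 2 * s else -2 * i

theorem prod_Ioo_neg_two_mul_sub (i n : ℕ) :
    ∏ j ∈ Ioo i n, (-2 * (i : ℚ) - -2 * j) = 2 ^ (n - 1 - i) * (n - 1 - i).factorial := by
  rw [prod_Ioo_eq_prod_range, ← prod_range_two_mul_add_two]
  exact prod_congr rfl fun k _ => by push_cast; ring

theorem prod_Ioi_neg_two_mul_sub (n : ℕ) :
    ∏ i : Fin n, ∏ j ∈ Ioi i, (-2 * (i : ℚ) - -2 * (j : ℚ)) = 2 ^ n.choose 2 * sf n := by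
  have hrow (i : Fin n) : ∏ j ∈ Ioi i, (-2 * (i : ℚ) - -2 * (j : ℚ)) =
      2 ^ (n - 1 - i) * (n - 1 - i).factorial := by
    rw [Fin.prod_Ioi_val i (fun j => -2 * (i : ℚ) - -2 * j), prod_Ioo_neg_two_mul_sub]
  simp only [hrow]
  rw [Fin.prod_univ_eq_prod_range (fun i => (2 : ℚ) ^ (n - 1 - i) * (n - 1 - i).factorial),
    prod_mul_distrib, prod_pow_eq_pow_sum, sum_range_reflect_id, sf_eq_prod_reflect]
  push_cast
  rfl

theorem prod_Ioo_node_sub {n s : ℕ} (hs : s < n) :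
    ∏ j ∈ Ioo s n, (node s s - node s j) = dfOdd (n - s) := by
  rw [prod_Ioo_eq_prod_range, show n - s = n - 1 - s + 1 by omega, dfOdd_eq_prod,
    prod_range_succ']
  simp only [Nat.cast_zero, mul_zero, zero_add, mul_one]
  refine prod_congr rfl fun k _ => ?_
  rw [node, node, if_pos rfl, if_neg (by omega)]
  push_cast
  ring

theorem prod_range_node_sub (s : ℕ) : ∏ i ∈ range s, (node s i - node s s) = dfOdd s := by
  rw [dfOdd_eq_prod, ← prod_range_reflect_cast (fun t => 2 * t + 1)]
  refine prod_congr rfl fun k hk => ?_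
  rw [node, node, if_pos rfl, if_neg (mem_range.mp hk).ne]
  ring

theorem prod_range_neg_two_mul_sub (s : ℕ) :
    ∏ i ∈ range s, (-2 * (i : ℚ) - -2 * s) = 2 ^ s * s.factorial := by
  rw [← prod_range_two_mul_add_two, ← prod_range_reflect_cast (fun t => 2 * t + 2)]
  exact prod_congr rfl fun k _ => by ring

theorem prod_node_sub {n s : ℕ} (hs : s < n) :
    ∏ i : Fin n, ∏ j ∈ Ioi i, (node s i - node s j) =
      2 ^ (n - 1).choose 2 * sf n * dfOdd (n - s) * dfOdd s /
        ((n - s - 1).factorial * s.factorial) := by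
  set p : Fin n := ⟨s, hs⟩
  set R := ∏ i ∈ univ.erase p, ∏ j ∈ (Ioi i).erase p, (node s i - node s j)
  have hR : R = ∏ i ∈ univ.erase p, ∏ j ∈ (Ioi i).erase p, (-2 * (i : ℚ) - -2 * (j : ℚ)) := by
    refine prod_congr rfl fun i hi => prod_congr rfl fun j hj => ?_
    have hi' : (i : ℕ) ≠ s := fun h => ne_of_mem_erase hi (Fin.ext h)
    have hj' : (j : ℕ) ≠ s := fun h => ne_of_mem_erase hj (Fin.ext h)
    rw [node, node, if_neg hi', if_neg hj']
  have hx : ∏ i : Fin n, ∏ j ∈ Ioi i, (node s i - node s j) = dfOdd (n - s) * dfOdd s * R := by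
    rw [prod_Ioi_eq_mul_prod_erase _ p, Fin.prod_Ioi_val p (fun j => node s s - node s j),
      Fin.prod_Iio_val p (fun i => node s i - node s s), prod_Ioo_node_sub hs,
      prod_range_node_sub]
  have hy : (2 : ℚ) ^ (n - 1).choose 2 * 2 ^ (n - 1 - s) * 2 ^ s * sf n =
      2 ^ (n - 1 - s) * (n - 1 - s).factorial * (2 ^ s * s.factorial) * R := by
    rw [← pow_add, ← pow_add, ← choose_two_eq_add hs, ← prod_Ioi_neg_two_mul_sub,
      prod_Ioi_eq_mul_prod_erase _ p, Fin.prod_Ioi_val p (fun j => -2 * (s : ℚ) - -2 * j),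
      Fin.prod_Iio_val p (fun i => -2 * (i : ℚ) - -2 * s), prod_Ioo_neg_two_mul_sub,
      prod_range_neg_two_mul_sub, hR]
  rw [hx, eq_div_iff (by positivity), show n - s - 1 = n - 1 - s by omega]
  refine mul_left_cancel₀ (by positivity : (2 : ℚ) ^ (n - 1 - s) * 2 ^ s ≠ 0) ?_
  linear_combination (dfOdd (n - s) * dfOdd s : ℚ) * hy.symm

noncomputable def lowerPoly (n s : ℕ) (i j : Fin n) : ℚ[X] :=
  if i.1 = s then rfP (X + C ((s : ℚ) + 1 - ((j.1 : ℚ) + 1))) j.1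
  else rfP (X + C (((i.1 : ℚ) + 1) + 1 - ((j.1 : ℚ) + 1))) j.1 *
    (X + C (((n : ℚ) + 1 - ((j.1 : ℚ) + 1)) / 2))

theorem monic_lowerPoly (n s : ℕ) (i j : Fin n) : (lowerPoly n s i j).Monic := by
  unfold lowerPoly
  split_ifs
  · exact monic_rfP_X_add_C _ _
  · exact (monic_rfP_X_add_C _ _).mul (monic_X_add_C _)

theorem natDegree_lowerPoly (n s : ℕ) (i j : Fin n) :
    (lowerPoly n s i j).natDegree = (if i.1 = s then 0 else 1) + j := by
  unfold lowerPoly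
  split_ifs
  · rw [natDegree_rfP_X_add_C, zero_add]
  · rw [(monic_rfP_X_add_C _ _).natDegree_mul (monic_X_add_C _), natDegree_rfP_X_add_C,
      natDegree_X_add_C, add_comm]

theorem lowerMatrix_eq (n s : ℕ) :
    (Matrix.of fun i j : Fin n =>
        if i.1 = s then
          C (rfq ((n : ℚ) + 1 + ((j.1 : ℚ) + 1) - 2 * (s : ℚ)) (n - (j.1 + 1))) *
            rfP (X + C ((s : ℚ) + 1 - ((j.1 : ℚ) + 1))) j.1
        else
          C (rfq ((n : ℚ) + 2 + ((j.1 : ℚ) + 1) - 2 * ((i.1 : ℚ) + 1)) (n - (j.1 + 1))) *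
            rfP (X + C (((i.1 : ℚ) + 1) + 1 - ((j.1 : ℚ) + 1))) j.1 *
            (X + C (((n : ℚ) + 1 - ((j.1 : ℚ) + 1)) / 2))) =
      Matrix.of fun i j : Fin n =>
        C (rfq (node s i + n + j + 1) (n - (j + 1))) * lowerPoly n s i j := by
  refine Matrix.ext fun i j => ?_
  simp only [Matrix.of_apply, lowerPoly, node]
  split_ifs
  · congr 3; ring
  · rw [mul_assoc]; congr 3; ring

theorem sum_degrees_lowerPoly {n s : ℕ} (hs : s < n) :
    ∑ i : Fin n, (if i.1 = s then 0 else 1) + ∑ j : Fin n, (j : ℕ) = (n + 1).choose 2 - 1 := by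
  rw [Fin.sum_univ_eq_sum_range (fun i => if i = s then 0 else 1),
    Fin.sum_univ_eq_sum_range (fun i => i), sum_range_id, ← Nat.choose_two_right,
    Nat.add_one_choose_two, sum_ite]
  simp only [sum_const_zero, sum_const, smul_eq_mul, mul_one, filter_ne',
    card_erase_of_mem (mem_range.mpr hs), card_range, zero_add]
  omega

theorem lower_det_degree_leadingCoeff_general (n s : ℕ) (hs : s < n) :
    (Matrix.det (Matrix.of fun i j : Fin n =>
        if i.1 = s then
          C (rfq ((n : ℚ) + 1 + ((j.1 : ℚ) + 1) - 2 * (s : ℚ)) (n - (j.1 + 1))) *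
            rfP (X + C ((s : ℚ) + 1 - ((j.1 : ℚ) + 1))) j.1
        else
          C (rfq ((n : ℚ) + 2 + ((j.1 : ℚ) + 1) - 2 * ((i.1 : ℚ) + 1)) (n - (j.1 + 1))) *
            rfP (X + C (((i.1 : ℚ) + 1) + 1 - ((j.1 : ℚ) + 1))) j.1 *
            (X + C (((n : ℚ) + 1 - ((j.1 : ℚ) + 1)) / 2)))).natDegree =
      Nat.choose (n + 1) 2 - 1 ∧
    (Matrix.det (Matrix.of fun i j : Fin n =>
        if i.1 = s then
          C (rfq ((n : ℚ) + 1 + ((j.1 : ℚ) + 1) - 2 * (s : ℚ)) (n - (j.1 + 1))) *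
            rfP (X + C ((s : ℚ) + 1 - ((j.1 : ℚ) + 1))) j.1
        else
          C (rfq ((n : ℚ) + 2 + ((j.1 : ℚ) + 1) - 2 * ((i.1 : ℚ) + 1)) (n - (j.1 + 1))) *
            rfP (X + C (((i.1 : ℚ) + 1) + 1 - ((j.1 : ℚ) + 1))) j.1 *
            (X + C (((n : ℚ) + 1 - ((j.1 : ℚ) + 1)) / 2)))).leadingCoeff =
      (2 : ℚ) ^ Nat.choose (n - 1) 2 * (sf n : ℚ) * (dfOdd (n - s) : ℚ) * (dfOdd s : ℚ) /
        ((Nat.factorial (n - s - 1) : ℚ) * (Nat.factorial s : ℚ)) := by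
  have hA : (Matrix.of fun i j : Fin n => rfq (node s i + n + j + 1) (n - (j + 1))).det =
      2 ^ (n - 1).choose 2 * sf n * dfOdd (n - s) * dfOdd s /
        ((n - s - 1).factorial * s.factorial) :=
    (det_rfq_eq_prod_sub _).trans (prod_node_sub hs)
  have hA0 : (Matrix.of fun i j : Fin n => rfq (node s i + n + j + 1) (n - (j + 1))).det ≠ 0 := by
    rw [hA]
    simp [sf_ne_zero, dfOdd_ne_zero, Nat.factorial_ne_zero]
  rw [lowerMatrix_eq]
  exact ⟨(natDegree_det_of_C_mul_monic (monic_lowerPoly n s) (natDegree_lowerPoly n s) hA0).trans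
      (sum_degrees_lowerPoly hs),
    (leadingCoeff_det_of_C_mul_monic (monic_lowerPoly n s) (natDegree_lowerPoly n s) hA0).trans hA⟩

/-- The determinant `det B(m)` (entries
`B_{ij} = (n+2+j-2i)_{n-j}(i+m+1-j)_{j-1}(m+(n+1-j)/2)` for `i ≠ s+1`,
`B_{s+1,j} = (n+1+j-2s)_{n-j}(s+m+1-j)_{j-1}`), as a polynomial in `m`, has
degree `C(n+1,2) - 1` and leading coefficient
`2^{C(n-1,2)}·(∏_{i<n} i!)·(2n-2s-1)!!·(2s-1)!!/((n-s-1)!·s!)`. -/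
theorem lower_det_degree_leadingCoeff (n s : ℕ) (hn : 1 ≤ n) (hs : s < n) :
    (Matrix.det (Matrix.of fun i j : Fin n =>
        if i.1 = s then
          C (rfq ((n : ℚ) + 1 + ((j.1 : ℚ) + 1) - 2 * (s : ℚ)) (n - (j.1 + 1))) *
            rfP (X + C ((s : ℚ) + 1 - ((j.1 : ℚ) + 1))) j.1
        else
          C (rfq ((n : ℚ) + 2 + ((j.1 : ℚ) + 1) - 2 * ((i.1 : ℚ) + 1)) (n - (j.1 + 1))) *
            rfP (X + C (((i.1 : ℚ) + 1) + 1 - ((j.1 : ℚ) + 1))) j.1 *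
            (X + C (((n : ℚ) + 1 - ((j.1 : ℚ) + 1)) / 2)))).natDegree =
      Nat.choose (n + 1) 2 - 1 ∧
    (Matrix.det (Matrix.of fun i j : Fin n =>
        if i.1 = s then
          C (rfq ((n : ℚ) + 1 + ((j.1 : ℚ) + 1) - 2 * (s : ℚ)) (n - (j.1 + 1))) *
            rfP (X + C ((s : ℚ) + 1 - ((j.1 : ℚ) + 1))) j.1
        else
          C (rfq ((n : ℚ) + 2 + ((j.1 : ℚ) + 1) - 2 * ((i.1 : ℚ) + 1)) (n - (j.1 + 1))) *
            rfP (X + C (((i.1 : ℚ) + 1) + 1 - ((j.1 : ℚ) + 1))) j.1 *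
            (X + C (((n : ℚ) + 1 - ((j.1 : ℚ) + 1)) / 2)))).leadingCoeff =
      (2 : ℚ) ^ Nat.choose (n - 1) 2 * (sf n : ℚ) * (dfOdd (n - s) : ℚ) * (dfOdd s : ℚ) /
        ((Nat.factorial (n - s - 1) : ℚ) * (Nat.factorial s : ℚ)) :=
  lower_det_degree_leadingCoeff_general n s hs
end

section
/- For nonnegative integers m, n and integers i, j, s with 1 ≤ i, j ≤ n and 0 ≤ s ≤ n-1, the number of lattice paths (with steps (1,0) and (0,-1)) from R_i to S_j, where R_i = (2i-2, m+i-1) for i ≠ s+1, R_{s+1} = (2s-1, m+s-1), and S_j = (n+j-1, j-1), in which paths starting with a horizontal step at R_i (i ≠ s+1) carry weight 1/2, equals (1/2)·binomial(n+m-i, m+i-j) + binomial(n+m-i, m+i-1-j) for i ≠ s+1, and binomial(n+m-s, m+s-j) for i = s+1. -/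
/-!
A path is its first step followed by a path from the next lattice point, so the number `P(x, y)`
of paths with displacement `(x, y)` satisfies Pascal's recurrence
`P(x, y) = P(x - 1, y) + P(x, y + 1)` away from the origin, and hence
`P(x, y) = C(x - y, -y)`. Splitting the paths from `R_i` by their first step gives the two
binomials for `i ≠ s + 1`; for `i = s + 1` the count is a single `P`.
-/

/-- Binomial coefficient `binomial a b` for integer lower index, zero when
`b < 0` (and, via `Nat.choose`, when `b > a`). -/
def cb (a : ℕ) (b : ℤ) : ℚ := if 0 ≤ b then (Nat.choose a b.toNat : ℚ) else 0

/-- A list of steps each equal to `(1,0)` or `(0,-1)`. -/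
def Steps (l : List (ℤ × ℤ)) : Prop :=
  ∀ p ∈ l, p = ((1 : ℤ), (0 : ℤ)) ∨ p = ((0 : ℤ), (-1 : ℤ))

namespace Steps

variable {p : ℤ × ℤ} {l : List (ℤ × ℤ)}

theorem nil : Steps [] := List.forall_mem_nil _

theorem cons_iff : Steps (p :: l) ↔ (p = (1, 0) ∨ p = (0, -1)) ∧ Steps l :=
  List.forall_mem_cons

theorem tail (hl : Steps l) : Steps l.tail := fun q hq => hl q (List.mem_of_mem_tail hq)

theorem sum_bounds (hl : Steps l) :
    0 ≤ l.sum.1 ∧ l.sum.2 ≤ 0 ∧ l.sum.1 - l.sum.2 = l.length := by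
  induction l with
  | nil => simp
  | cons q t ih =>
    obtain ⟨hq, ht⟩ := cons_iff.mp hl
    have := ih ht
    rcases hq with rfl | rfl <;>
      simp only [List.sum_cons, Prod.fst_add, Prod.snd_add, List.length_cons] <;>
      push_cast <;> omega

theorem eq_nil_of_sum_eq_zero (hl : Steps l) (h0 : l.sum = 0) : l = [] := by
  have := hl.sum_bounds
  rw [h0] at this
  exact List.eq_nil_of_length_eq_zero (by simp at this; omega)

theorem exists_map_cond (hl : Steps l) :
    ∃ bs : List Bool, bs.map (fun b => cond b ((1 : ℤ), (0 : ℤ)) (0, -1)) = l := by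
  induction l with
  | nil => exact ⟨[], rfl⟩
  | cons q t ih =>
    obtain ⟨hq, ht⟩ := cons_iff.mp hl
    obtain ⟨bs, rfl⟩ := ih ht
    rcases hq with rfl | rfl
    exacts [⟨true :: bs, rfl⟩, ⟨false :: bs, rfl⟩]

theorem head?_eq_of_ne (hl : Steps l) (h0 : l.sum ≠ 0) (h : l.head? ≠ some (1, 0)) :
    l.head? = some (0, -1) := by
  cases l with
  | nil => exact absurd rfl h0
  | cons q t =>
    rcases (cons_iff.mp hl).1 with rfl | rfl
    exacts [absurd rfl h, rfl]

end Steps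

theorem setOf_steps_sum_eq_finite (v : ℤ × ℤ) : {l | Steps l ∧ l.sum = v}.Finite := by
  refine ((List.finite_length_eq Bool (v.1 - v.2).toNat).image
    (List.map fun b => cond b ((1 : ℤ), (0 : ℤ)) (0, -1))).subset ?_
  rintro l ⟨hl, rfl⟩
  obtain ⟨bs, rfl⟩ := hl.exists_map_cond
  have := hl.sum_bounds
  simp only [List.length_map] at this
  exact ⟨bs, by change bs.length = _; omega, rfl⟩

instance (v : ℤ × ℤ) : Finite {l // Steps l ∧ l.sum = v} :=
  (setOf_steps_sum_eq_finite v).to_subtype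

def stepsConsEquiv (x y : ℤ) {p : ℤ × ℤ} (hp : p = (1, 0) ∨ p = (0, -1)) :
    {l // Steps l ∧ l.sum = (x, y) ∧ l.head? = some p} ≃
      {l // Steps l ∧ l.sum = (x - p.1, y - p.2)} where
  toFun l := ⟨l.1.tail, l.2.1.tail, by
    have hsum := l.2.2.1
    rw [← List.cons_head?_tail l.2.2.2, List.sum_cons] at hsum
    exact eq_sub_of_add_eq' hsum⟩
  invFun l := ⟨p :: l.1, Steps.cons_iff.mpr ⟨hp, l.2.1⟩,
    by rw [List.sum_cons, l.2.2]; ext <;> simp, rfl⟩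
  left_inv l := Subtype.ext (List.cons_head?_tail l.2.2.2)
  right_inv _ := rfl

theorem Nat.card_subtype_eq_card_and_add_card_and_not {α : Type*} (P Q : α → Prop)
    [Finite {a // P a}] :
    Nat.card {a // P a} = Nat.card {a // P a ∧ Q a} + Nat.card {a // P a ∧ ¬Q a} := by
  classical
  rw [← Nat.card_congr (Equiv.sumCompl fun a : {a // P a} => Q a), Nat.card_sum,
    Nat.card_congr (Equiv.subtypeSubtypeEquivSubtypeInter P Q),
    Nat.card_congr (Equiv.subtypeSubtypeEquivSubtypeInter P fun a => ¬Q a)]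

theorem card_steps_sum_eq_zero {x y : ℤ} (h : ¬(0 ≤ x ∧ y ≤ 0)) :
    Nat.card {l // Steps l ∧ l.sum = (x, y)} = 0 := by
  have : IsEmpty {l // Steps l ∧ l.sum = (x, y)} := ⟨fun ⟨_, hl, hsum⟩ => by
    have := hl.sum_bounds
    rw [hsum] at this
    exact h ⟨this.1, this.2.1⟩⟩
  exact Nat.card_of_isEmpty

theorem card_steps_sum_zero : Nat.card {l // Steps l ∧ l.sum = ((0 : ℤ), (0 : ℤ))} = 1 :=
  Nat.card_eq_one_iff_exists.mpr ⟨⟨[], Steps.nil, rfl⟩, fun ⟨_, hl, hsum⟩ =>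
    Subtype.ext (hl.eq_nil_of_sum_eq_zero hsum)⟩

theorem card_steps_sum_head?_eq {x y : ℤ} :
    Nat.card {l // Steps l ∧ l.sum = (x, y) ∧ l.head? = some (1, 0)} =
      Nat.card {l // Steps l ∧ l.sum = (x - 1, y)} := by
  rw [Nat.card_congr (stepsConsEquiv x y (Or.inl rfl)), sub_zero]

theorem card_steps_sum_head?_ne {x y : ℤ} (h0 : (x, y) ≠ 0) :
    Nat.card {l // Steps l ∧ l.sum = (x, y) ∧ l.head? ≠ some (1, 0)} =
      Nat.card {l // Steps l ∧ l.sum = (x, y + 1)} := by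
  have hhead : ∀ l, Steps l ∧ l.sum = (x, y) ∧ l.head? ≠ some (1, 0) ↔
      Steps l ∧ l.sum = (x, y) ∧ l.head? = some (0, -1) := fun l =>
    ⟨fun ⟨hl, hsum, hne⟩ => ⟨hl, hsum, hl.head?_eq_of_ne (by rwa [hsum]) hne⟩,
      fun ⟨hl, hsum, heq⟩ => ⟨hl, hsum, by simp [heq]⟩⟩
  rw [Nat.card_congr ((Equiv.subtypeEquivRight hhead).trans
    (stepsConsEquiv x y (Or.inr rfl))), sub_zero, sub_neg_eq_add]

theorem card_steps_sum_eq_add {x y : ℤ} (h0 : (x, y) ≠ 0) :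
    Nat.card {l // Steps l ∧ l.sum = (x, y)} =
      Nat.card {l // Steps l ∧ l.sum = (x - 1, y)} +
        Nat.card {l // Steps l ∧ l.sum = (x, y + 1)} := by
  rw [Nat.card_subtype_eq_card_and_add_card_and_not _ fun l => l.head? = some (1, 0)]
  simp only [and_assoc]
  rw [card_steps_sum_head?_eq, card_steps_sum_head?_ne h0]

theorem card_steps_sum_eq_choose (a b : ℕ) :
    Nat.card {l // Steps l ∧ l.sum = ((a : ℤ), -(b : ℤ))} = (a + b).choose a := by
  have hsub (a : ℕ) : ((a + 1 : ℕ) : ℤ) - 1 = a := by push_cast; ring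
  have hadd (b : ℕ) : -((b + 1 : ℕ) : ℤ) + 1 = -b := by push_cast; ring
  induction a generalizing b with
  | zero =>
    induction b with
    | zero => exact card_steps_sum_zero
    | succ b ih =>
      rw [card_steps_sum_eq_add (by simp; omega), card_steps_sum_eq_zero (by simp), hadd, ih]
      simp
  | succ a iha =>
    induction b with
    | zero =>
      rw [card_steps_sum_eq_add (by simp; omega), card_steps_sum_eq_zero (x := ((a + 1 : ℕ) : ℤ))
        (by simp), hsub, iha]
      simp
    | succ b ihb =>
      rw [card_steps_sum_eq_add (by simp; omega), hsub, hadd, iha, ihb,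
        show a + 1 + (b + 1) = a + (b + 1) + 1 by omega, Nat.choose_succ_succ',
        show a + 1 + b = a + (b + 1) by omega]

theorem card_steps_sum_eq_cb {A : ℕ} {x y : ℤ} (hA : x - y = A) :
    (Nat.card {l // Steps l ∧ l.sum = (x, y)} : ℚ) = cb A (-y) := by
  by_cases h : 0 ≤ x ∧ y ≤ 0
  · obtain ⟨a, rfl⟩ := Int.eq_ofNat_of_zero_le h.1
    obtain ⟨b, rfl⟩ : ∃ b : ℕ, y = -b := ⟨(-y).toNat, by omega⟩
    rw [card_steps_sum_eq_choose, cb, if_pos (by omega), neg_neg, Int.toNat_natCast,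
      show A = a + b by omega, Nat.choose_symm_add]
  · rw [card_steps_sum_eq_zero h, cb]
    split_ifs with hy
    · rw [Nat.choose_eq_zero_of_lt (by omega), Nat.cast_zero]
    · rw [Nat.cast_zero]

theorem weighted_path_counts_general (n m s i j : ℕ) (hi2 : i ≤ n) :
    (i ≠ s + 1 →
      (1 / 2 : ℚ) * (Nat.card {l : List (ℤ × ℤ) // Steps l ∧
          l.sum = (((n : ℤ) + j - 1) - (2 * (i : ℤ) - 2), ((j : ℤ) - 1) - ((m : ℤ) + i - 1)) ∧
          l.head? = some ((1 : ℤ), (0 : ℤ))}) +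
        (Nat.card {l : List (ℤ × ℤ) // Steps l ∧
          l.sum = (((n : ℤ) + j - 1) - (2 * (i : ℤ) - 2), ((j : ℤ) - 1) - ((m : ℤ) + i - 1)) ∧
          l.head? ≠ some ((1 : ℤ), (0 : ℤ))}) =
      (1 / 2 : ℚ) * cb (n + m - i) ((m : ℤ) + i - j) + cb (n + m - i) ((m : ℤ) + i - 1 - j)) ∧
    (i = s + 1 →
      (Nat.card {l : List (ℤ × ℤ) // Steps l ∧
          l.sum = (((n : ℤ) + j - 1) - (2 * (s : ℤ) - 1), ((j : ℤ) - 1) - ((m : ℤ) + s - 1))} : ℚ) =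
      cb (n + m - s) ((m : ℤ) + s - j)) := by
  constructor
  · intro _
    rw [card_steps_sum_head?_eq, card_steps_sum_head?_ne (by simp; omega),
      card_steps_sum_eq_cb (A := n + m - i) (by omega),
      card_steps_sum_eq_cb (A := n + m - i) (by omega)]
    congr 3 <;> ring
  · rintro rfl
    rw [card_steps_sum_eq_cb (A := n + m - s) (by omega)]
    congr 1
    ring

/-- Lemma on the weighted lattice path counts for the lower half: paths run
from `R_i = (2i-2, m+i-1)` (for `i ≠ s+1`), resp. `R_{s+1} = (2s-1, m+s-1)`,
to `S_j = (n+j-1, j-1)`, where for `i ≠ s+1` a path starting with a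
horizontal step carries weight `1/2`.  The weighted count equals
`(1/2)·C(n+m-i, m+i-j) + C(n+m-i, m+i-1-j)` for `i ≠ s+1`, and
`C(n+m-s, m+s-j)` for `i = s+1`. -/
theorem weighted_path_counts (n m s i j : ℕ) (hs : s < n)
    (hi1 : 1 ≤ i) (hi2 : i ≤ n) (hj1 : 1 ≤ j) (hj2 : j ≤ n) :
    (i ≠ s + 1 →
      (1 / 2 : ℚ) * (Nat.card {l : List (ℤ × ℤ) // Steps l ∧
          l.sum = (((n : ℤ) + j - 1) - (2 * (i : ℤ) - 2), ((j : ℤ) - 1) - ((m : ℤ) + i - 1)) ∧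
          l.head? = some ((1 : ℤ), (0 : ℤ))}) +
        (Nat.card {l : List (ℤ × ℤ) // Steps l ∧
          l.sum = (((n : ℤ) + j - 1) - (2 * (i : ℤ) - 2), ((j : ℤ) - 1) - ((m : ℤ) + i - 1)) ∧
          l.head? ≠ some ((1 : ℤ), (0 : ℤ))}) =
      (1 / 2 : ℚ) * cb (n + m - i) ((m : ℤ) + i - j) + cb (n + m - i) ((m : ℤ) + i - 1 - j)) ∧
    (i = s + 1 →
      (Nat.card {l : List (ℤ × ℤ) // Steps l ∧
          l.sum = (((n : ℤ) + j - 1) - (2 * (s : ℤ) - 1), ((j : ℤ) - 1) - ((m : ℤ) + s - 1))} : ℚ) =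
      cb (n + m - s) ((m : ℤ) + s - j)) :=
  weighted_path_counts_general n m s i j hi2
end

section
/- For n ≥ 1, 0 ≤ s ≤ n-1, and nonnegative integer m, define A_{ij} = (1/2)·binomial(n+m-i, m+i-j) + binomial(n+m-i, m+i-1-j) for i ≠ s+1 and A_{s+1,j} = binomial(n+m-s, m+s-j). Then det_{1≤i,j≤n}(A_{ij}) = [(n+m-s)(s+m)/((2n-2s)·∏_{i=1}^{n}(2n+1-2i)!)] · det_{1≤i,j≤n}(B_{ij}), where B_{ij} = (n+2+j-2i)_{n-j}(i+m+1-j)_{j-1}(m+(n+1-j)/2) for i ≠ s+1 and B_{s+1,j} = (n+1+j-2s)_{n-j}(s+m+1-j)_{j-1}. -/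
open Finset Nat

lemma rf_succ (x : ℚ) (k : ℕ) : rf x (k + 1) = rf x k * (x + k) :=
  prod_range_succ _ _

lemma factorial_mul_rf_natCast_add_one (p q : ℕ) : (p ! : ℚ) * rf (p + 1) q = (p + q)! := by
  induction q with
  | zero => simp [rf]
  | succ q ih =>
    rw [rf_succ, ← mul_assoc, ih, ← add_assoc, factorial_succ (p + q)]
    push_cast
    ring

lemma rf_intCast_eq_zero {z : ℤ} {k : ℕ} (hz : z ≤ 0) (hk : -z < k) : rf z k = 0 := by
  obtain ⟨t, rfl⟩ := Int.exists_eq_neg_ofNat hz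
  exact prod_eq_zero (i := t) (mem_range.2 (by omega)) (by push_cast; ring)

lemma cb_of_neg {a : ℕ} {b : ℤ} (hb : b < 0) : cb a b = 0 := if_neg hb.not_ge

lemma cb_natCast (a b : ℕ) : cb a b = a.choose b := by
  simp [cb]

lemma cb_succ (a : ℕ) (b : ℤ) : cb (a + 1) b = cb a b + cb a (b - 1) := by
  rcases lt_or_ge b 0 with hb | hb
  · rw [cb_of_neg hb, cb_of_neg hb, cb_of_neg (by omega), add_zero]
  lift b to ℕ using hb
  cases b with
  | zero => simp [cb]
  | succ B => simp [cb, choose_succ_succ', add_comm, show (0 : ℤ) ≤ B + 1 by omega]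

lemma intCast_mul_cb_succ (a : ℕ) (b : ℤ) : b * cb (a + 1) b = (a + 1) * cb a (b - 1) := by
  rcases lt_or_ge b 1 with hb | hb
  · rw [cb_of_neg (b := b - 1) (by omega), mul_zero]
    rcases lt_or_ge b 0 with hb' | hb'
    · rw [cb_of_neg hb', mul_zero]
    · simp [show b = 0 by omega]
  obtain ⟨B, rfl⟩ : ∃ B : ℕ, b = B + 1 := ⟨(b - 1).toNat, by omega⟩
  rw [add_sub_cancel_right, show (B : ℤ) + 1 = (B + 1 : ℕ) by push_cast; ring, cb_natCast,
    cb_natCast, mul_comm]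
  exact_mod_cast (add_one_mul_choose_eq a B).symm

lemma half_mul_cb_add_cb_sub_one (a : ℕ) (b : ℤ) :
    1 / 2 * cb a b + cb a (b - 1) = (a + 1 + b) / (2 * (a + 1)) * cb (a + 1) b := by
  have pascal := cb_succ a b
  have absorb := intCast_mul_cb_succ a b
  field_simp
  linear_combination (-(a + 1 : ℚ)) * pascal - absorb

lemma cb_eq_factorial_div_mul_rf_mul_rf {a k l P Q : ℕ} {b : ℤ} (hP : b + k = P)
    (hQ : a - b + l = Q) :
    cb a b = a ! / (P ! * Q !) * (rf (b + 1) k * rf (a - b + 1) l) := by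
  rcases lt_or_ge b 0 with hb | hb
  · have h := rf_intCast_eq_zero (z := b + 1) (k := k) (by omega) (by omega)
    push_cast at h
    rw [cb_of_neg hb, h, zero_mul, mul_zero]
  lift b to ℕ using hb
  simp only [Int.cast_natCast] at *
  rcases lt_or_ge a b with hab | hab
  · have h := rf_intCast_eq_zero (z := a - b + 1) (k := l) (by omega) (by omega)
    push_cast at h
    rw [cb_natCast, choose_eq_zero_of_lt hab, h]
    simp
  have hk : rf (b + 1) k = P ! / b ! := by
    rw [show P = b + k by omega, ← factorial_mul_rf_natCast_add_one]
    field_simp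
  have hl : rf (a - b + 1) l = Q ! / (a - b)! := by
    rw [← cast_sub hab, show Q = a - b + l by omega, ← factorial_mul_rf_natCast_add_one]
    field_simp
  rw [cb_natCast, cast_choose ℚ hab, hk, hl]
  field_simp

def rowScale (n m i : ℕ) : ℚ := (n + m - i - 1)! / ((m + i)! * (2 * n - 2 * i - 1)!)

lemma half_mul_cb_add_cb_eq_rowScale_mul {n m I J : ℕ} (hI : I < n) (hJ : J < n) :
    (1 / 2 : ℚ) * cb (n + m - (I + 1)) ((m : ℤ) + (I + 1) - (J + 1)) +
        cb (n + m - (I + 1)) ((m : ℤ) + I - (J + 1)) =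
      rowScale n m I *
        (rf ((n : ℚ) + 2 + ((J : ℚ) + 1) - 2 * ((I : ℚ) + 1)) (n - (J + 1)) *
          rf (((I : ℚ) + 1) + (m : ℚ) + 1 - ((J : ℚ) + 1)) J *
          ((m : ℚ) + ((n : ℚ) + 1 - ((J : ℚ) + 1)) / 2)) := by
  obtain ⟨a, ha⟩ : ∃ a, n + m - (I + 1) = a := ⟨_, rfl⟩
  have ha' : (a : ℚ) = n + m - I - 1 := by
    rw [← ha, cast_sub (by omega)]; push_cast; ring
  rw [ha, show (m : ℤ) + I - (J + 1) = (m : ℤ) + (I + 1) - (J + 1) - 1 by ring,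
    half_mul_cb_add_cb_sub_one, cb_eq_factorial_div_mul_rf_mul_rf (k := J) (l := n - (J + 1))
      (P := m + I) (Q := 2 * n - 2 * I - 1) (by omega) (by omega), rowScale,
    show n + m - I - 1 = a by omega, factorial_succ]
  push_cast
  rw [show (a : ℚ) + 1 - ((m : ℚ) + (I + 1) - (J + 1)) + 1
      = (n : ℚ) + 2 + ((J : ℚ) + 1) - 2 * ((I : ℚ) + 1) by rw [ha']; ring,
    show (m : ℚ) + (I + 1) - (J + 1) + 1 = ((I : ℚ) + 1) + (m : ℚ) + 1 - ((J : ℚ) + 1) by ring]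
  field_simp
  rw [ha']
  ring

lemma cb_eq_mul_rowScale_mul {n m s J : ℕ} (hs : s < n) (hJ : J < n) :
    cb (n + m - s) ((m : ℤ) + s - (J + 1)) =
      ((n + m - s : ℕ) : ℚ) * ((s + m : ℕ) : ℚ) / ((2 * n - 2 * s : ℕ) : ℚ) * rowScale n m s *
        (rf ((n : ℚ) + 1 + ((J : ℚ) + 1) - 2 * (s : ℚ)) (n - (J + 1)) *
          rf ((s : ℚ) + (m : ℚ) + 1 - ((J : ℚ) + 1)) J) := by
  rcases eq_or_ne (s + m) 0 with hsm | hsm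
  · rw [cb_of_neg (by omega), hsm, cast_zero, mul_zero, zero_div, zero_mul, zero_mul]
  obtain ⟨c, hc⟩ : ∃ c, n + m - s = c + 1 := ⟨n + m - s - 1, by omega⟩
  obtain ⟨p, hp⟩ : ∃ p, s + m = p + 1 := ⟨s + m - 1, by omega⟩
  obtain ⟨q, hq⟩ : ∃ q, 2 * n - 2 * s = q + 1 := ⟨2 * n - 2 * s - 1, by omega⟩
  have hc' : (c : ℚ) = n + m - s - 1 := by
    rw [eq_sub_iff_add_eq, ← cast_add_one, ← hc, cast_sub (by omega)]; push_cast; ring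
  rw [cb_eq_factorial_div_mul_rf_mul_rf (k := J) (l := n - (J + 1)) (P := p) (Q := q + 1)
      (by omega) (by omega), rowScale, show n + m - s - 1 = c by omega,
    show m + s = p + 1 by omega, show 2 * n - 2 * s - 1 = q by omega, hc, hp, hq]
  push_cast
  rw [hc', show ((m : ℚ) + s - (J + 1)) + 1 = (s : ℚ) + (m : ℚ) + 1 - ((J : ℚ) + 1) by ring,
    show (n : ℚ) + m - s - 1 + 1 - (m + s - (J + 1)) + 1
      = (n : ℚ) + 1 + ((J : ℚ) + 1) - 2 * (s : ℚ) by ring]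
  simp only [factorial_succ]
  push_cast
  field_simp
  rw [hc']
  ring

lemma prod_range_rowScale (n m : ℕ) :
    ∏ i ∈ range n, rowScale n m i = (∏ i ∈ Icc 1 n, ((2 * n + 1 - 2 * i)! : ℚ))⁻¹ := by
  have hnum : ∏ i ∈ range n, ((n + m - i - 1)! : ℚ) = ∏ i ∈ range n, ((m + i)! : ℚ) := by
    rw [← prod_range_reflect (fun i => ((m + i)! : ℚ))]
    refine prod_congr rfl fun i hi => ?_
    rw [mem_range] at hi
    congr 2
    omega
  have hden : ∏ i ∈ Icc 1 n, ((2 * n + 1 - 2 * i)! : ℚ) =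
      ∏ i ∈ range n, ((2 * n - 2 * i - 1)! : ℚ) := by
    rw [← Ico_add_one_right_eq_Icc, prod_Ico_eq_prod_range, add_tsub_cancel_right]
    refine prod_congr rfl fun i _ => ?_
    congr 2
    omega
  have hne : ∏ i ∈ range n, ((m + i)! : ℚ) ≠ 0 :=
    prod_ne_zero_iff.2 fun i _ => by positivity
  simp only [rowScale, prod_div_distrib, prod_mul_distrib]
  rw [hnum, hden, ← div_div, div_self hne, one_div]

/-- Row `i` (0-indexed) of `A` is `rowFactor n m s i` times row `i` of `B`. -/
def rowFactor (n m s i : ℕ) : ℚ :=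
  if i = s then
    ((n + m - s : ℕ) : ℚ) * ((s + m : ℕ) : ℚ) / ((2 * n - 2 * s : ℕ) : ℚ) * rowScale n m s
  else rowScale n m i

lemma prod_rowFactor {n m s : ℕ} (hs : s < n) :
    ∏ i : Fin n, rowFactor n m s i =
      ((n + m - s : ℕ) : ℚ) * ((s + m : ℕ) : ℚ) /
        (((2 * n - 2 * s : ℕ) : ℚ) * ∏ i ∈ Icc 1 n, ((2 * n + 1 - 2 * i)! : ℚ)) := by
  have herase : ∏ i ∈ (range n).erase s, rowFactor n m s i =
      ∏ i ∈ (range n).erase s, rowScale n m i :=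
    prod_congr rfl fun i hi => if_neg (ne_of_mem_erase hi)
  rw [Fin.prod_univ_eq_prod_range (rowFactor n m s), ← mul_prod_erase _ _ (mem_range.2 hs),
    herase, rowFactor, if_pos rfl, mul_assoc,
    mul_prod_erase _ _ (mem_range.2 hs), prod_range_rowScale]
  ring

theorem det_A_eq_factor_det_B_general (n m s : ℕ) (hs : s < n) :
    Matrix.det (Matrix.of fun i j : Fin n =>
        if i.1 = s then cb (n + m - s) ((m : ℤ) + s - (j.1 + 1))
        else (1 / 2 : ℚ) * cb (n + m - (i.1 + 1)) ((m : ℤ) + (i.1 + 1) - (j.1 + 1)) +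
          cb (n + m - (i.1 + 1)) ((m : ℤ) + i.1 - (j.1 + 1))) =
      (((n + m - s : ℕ) : ℚ) * ((s + m : ℕ) : ℚ) /
          (((2 * n - 2 * s : ℕ) : ℚ) *
            ∏ i ∈ Finset.Icc 1 n, (Nat.factorial (2 * n + 1 - 2 * i) : ℚ))) *
        Matrix.det (Matrix.of fun i j : Fin n =>
          if i.1 = s then
            rf ((n : ℚ) + 1 + ((j.1 : ℚ) + 1) - 2 * (s : ℚ)) (n - (j.1 + 1)) *
              rf ((s : ℚ) + (m : ℚ) + 1 - ((j.1 : ℚ) + 1)) j.1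
          else
            rf ((n : ℚ) + 2 + ((j.1 : ℚ) + 1) - 2 * ((i.1 : ℚ) + 1)) (n - (j.1 + 1)) *
              rf (((i.1 : ℚ) + 1) + (m : ℚ) + 1 - ((j.1 : ℚ) + 1)) j.1 *
              ((m : ℚ) + ((n : ℚ) + 1 - ((j.1 : ℚ) + 1)) / 2)) := by
  rw [← prod_rowFactor hs, ← Matrix.det_mul_column]
  congr 1
  ext i j
  simp only [Matrix.of_apply, rowFactor]
  split_ifs with hi
  · subst hi
    exact cb_eq_mul_rowScale_mul hs j.2
  · exact half_mul_cb_add_cb_eq_rowScale_mul i.2 j.2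

/-- Lemma relating the lattice-path determinant to the polynomial
determinant: `det A = [(n+m-s)(s+m)/((2n-2s)·∏_{i=1}^{n}(2n+1-2i)!)]·det B`,
where `A_{ij} = (1/2)·C(n+m-i, m+i-j) + C(n+m-i, m+i-1-j)` for `i ≠ s+1`,
`A_{s+1,j} = C(n+m-s, m+s-j)`, and `B` is as in the paper. -/
theorem det_A_eq_factor_det_B (n m s : ℕ) (hn : 1 ≤ n) (hs : s < n) :
    Matrix.det (Matrix.of fun i j : Fin n =>
        if i.1 = s then cb (n + m - s) ((m : ℤ) + s - (j.1 + 1))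
        else (1 / 2 : ℚ) * cb (n + m - (i.1 + 1)) ((m : ℤ) + (i.1 + 1) - (j.1 + 1)) +
          cb (n + m - (i.1 + 1)) ((m : ℤ) + i.1 - (j.1 + 1))) =
      (((n + m - s : ℕ) : ℚ) * ((s + m : ℕ) : ℚ) /
          (((2 * n - 2 * s : ℕ) : ℚ) *
            ∏ i ∈ Finset.Icc 1 n, (Nat.factorial (2 * n + 1 - 2 * i) : ℚ))) *
        Matrix.det (Matrix.of fun i j : Fin n =>
          if i.1 = s then
            rf ((n : ℚ) + 1 + ((j.1 : ℚ) + 1) - 2 * (s : ℚ)) (n - (j.1 + 1)) *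
              rf ((s : ℚ) + (m : ℚ) + 1 - ((j.1 : ℚ) + 1)) j.1
          else
            rf ((n : ℚ) + 2 + ((j.1 : ℚ) + 1) - 2 * ((i.1 : ℚ) + 1)) (n - (j.1 + 1)) *
              rf (((i.1 : ℚ) + 1) + (m : ℚ) + 1 - ((j.1 : ℚ) + 1)) j.1 *
              ((m : ℚ) + ((n : ℚ) + 1 - ((j.1 : ℚ) + 1)) / 2)) :=
  det_A_eq_factor_det_B_general n m s hs
end

section
/- For n ≥ 2, m ≥ 0, 1 ≤ s ≤ n-1, the n×n matrix with entries Ã_{ij}(n,m,s) defined by Ã_{ij} = (1/2)·binomial(n+m-i, m+i-j+1) + binomial(n+m-i, m+i-j) for i ≠ s, and Ã_{sj} = binomial(n+m-s+1, m+s-j), satisfies: row n of Ã equals the unit vector e_n (i.e., Ã_{nj} = 1 if j = n and 0 otherwise), and det_{1≤i,j≤n}(Ã_{ij}(n,m,s)) = det_{1≤i,j≤n-1}(A_{ij}(n-1,m+1,s-1)), where A_{ij}(n,m,s) = (1/2)·binomial(n+m-i, m+i-j) + binomial(n+m-i, m+i-1-j) for i ≠ s+1 and A_{s+1,j}(n,m,s)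 = binomial(n+m-s, m+s-j). -/
/-- The even-case entries (`1`-based indices `i, j`):
`A_{ij}(n,m,s) = (1/2)·C(n+m-i, m+i-j) + C(n+m-i, m+i-1-j)` for `i ≠ s+1`,
`A_{s+1,j}(n,m,s) = C(n+m-s, m+s-j)`. -/
def Aent (n m s i j : ℕ) : ℚ :=
  if i = s + 1 then cb (n + m - s) ((m : ℤ) + s - j)
  else (1 / 2 : ℚ) * cb (n + m - i) ((m : ℤ) + i - j) + cb (n + m - i) ((m : ℤ) + i - 1 - j)

/-- The odd-case entries (`1`-based indices `i, j`):
`Ã_{ij}(n,m,s) = (1/2)·C(n+m-i, m+i-j+1) + C(n+m-i, m+i-j)` for `i ≠ s`,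
`Ã_{sj}(n,m,s) = C(n+m-s+1, m+s-j)`. -/
def Atil (n m s i j : ℕ) : ℚ :=
  if i = s then cb (n + m - s + 1) ((m : ℤ) + s - j)
  else (1 / 2 : ℚ) * cb (n + m - i) ((m : ℤ) + i - j + 1) + cb (n + m - i) ((m : ℤ) + i - j)

/-! The last row of `Ã(n,m,s)` is `e_n`, so expanding along it leaves the leading
`(n-1)×(n-1)` minor; the entries of `Ã(n,m,s)` coincide with those of `A(n-1,m+1,s-1)`
after the index shift `m ↦ m+1`, `s ↦ s-1`. -/

lemma cb_eq_zero {a : ℕ} {b : ℤ} (h : (a : ℤ) < b) : cb a b = 0 := by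
  unfold cb
  split
  · rw [Nat.choose_eq_zero_of_lt (by omega), Nat.cast_zero]
  · rfl

lemma cb_self (a : ℕ) : cb a a = 1 := by
  simp [cb]

lemma Matrix.det_eq_det_submatrix_castSucc_of_last_row {R : Type*} [CommRing R] {k : ℕ}
    (M : Matrix (Fin (k + 1)) (Fin (k + 1)) R)
    (hM : ∀ j, M (Fin.last k) j = if j = Fin.last k then 1 else 0) :
    M.det = (M.submatrix Fin.castSucc Fin.castSucc).det := by
  rw [Matrix.det_succ_row _ (Fin.last k),
    Fintype.sum_eq_single (Fin.last k) fun j hj => by rw [hM, if_neg hj, mul_zero, zero_mul]]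
  simp [hM, ← two_mul]

lemma Atil_last_row {n m s j : ℕ} (hs : s ≠ n) (hj : j ≤ n) :
    Atil n m s n j = if j = n then 1 else 0 := by
  rw [Atil, if_neg hs.symm, Nat.add_sub_cancel_left]
  split
  · subst j
    rw [cb_eq_zero (by omega), show (m : ℤ) + n - n = m by ring, cb_self]
    ring
  · rw [cb_eq_zero (by omega), cb_eq_zero (by omega)]
    ring

lemma Atil_eq_Aent {n m s : ℕ} (hs1 : 1 ≤ s) (hs2 : s ≤ n) (i j : ℕ) :
    Atil n m s i j = Aent (n - 1) (m + 1) (s - 1) i j := by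
  have hn : n - 1 + (m + 1) = n + m := by omega
  have hs : n + m - (s - 1) = n + m - s + 1 := by omega
  simp only [Atil, Aent, hn, hs, Nat.sub_add_cancel hs1]
  push_cast [Nat.cast_sub hs1]
  ring_nf

theorem odd_det_reduction_general (n m s : ℕ) (hs1 : 1 ≤ s) (hs2 : s ≤ n - 1) :
    (∀ j : Fin n, Atil n m s n (j.1 + 1) = if j.1 + 1 = n then 1 else 0) ∧
    Matrix.det (Matrix.of fun i j : Fin n => Atil n m s (i.1 + 1) (j.1 + 1)) =
      Matrix.det (Matrix.of fun i j : Fin (n - 1) =>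
        Aent (n - 1) (m + 1) (s - 1) (i.1 + 1) (j.1 + 1)) := by
  obtain ⟨k, rfl⟩ : ∃ k, n = k + 1 := ⟨n - 1, by omega⟩
  have hrow : ∀ j : Fin (k + 1), Atil (k + 1) m s (k + 1) (j.1 + 1) =
      if j.1 + 1 = k + 1 then 1 else 0 := fun j => Atil_last_row (by omega) j.isLt
  refine ⟨hrow, ?_⟩
  rw [Matrix.det_eq_det_submatrix_castSucc_of_last_row _ fun j => by
    simpa [Fin.ext_iff] using hrow j]
  congr 1
  ext i j
  exact Atil_eq_Aent hs1 (by omega) _ _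

/-- Reduction of the odd-side lower-half determinant to the even-side case:
row `n` of `Ã(n,m,s)` is the unit vector `e_n`, and
`det_{1≤i,j≤n} Ã_{ij}(n,m,s) = det_{1≤i,j≤n-1} A_{ij}(n-1, m+1, s-1)`. -/
theorem odd_det_reduction (n m s : ℕ) (hn : 2 ≤ n) (hs1 : 1 ≤ s) (hs2 : s ≤ n - 1) :
    (∀ j : Fin n, Atil n m s n (j.1 + 1) = if j.1 + 1 = n then 1 else 0) ∧
    Matrix.det (Matrix.of fun i j : Fin n => Atil n m s (i.1 + 1) (j.1 + 1)) =
      Matrix.det (Matrix.of fun i j : Fin (n - 1) =>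
        Aent (n - 1) (m + 1) (s - 1) (i.1 + 1) (j.1 + 1)) :=
  odd_det_reduction_general n m s hs1 hs2
end
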